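/- arXiv:0804.4388 — 11 statements merged into one kernel-verified Lean document; each statement's English description precedes it below -/
import Mathlib

section
/- Let β > 1, h > 0, and τ > 0 be fixed. For q ∈ [0, τ], let σ(q) ∈ (0,1) be defined implicitly by (τ - q)·σ/√(1-σ²) + q·σ/√(β²-σ²) = h, and define L(q) = (τ-q)/√(1-σ(q)²) + β²·q/√(β²-σ(q)²). Then L is strictly increasing in q on (0, τ). -/
open Real

lemma aux_concave (c s t : ℝ) (hc : 1 ≤ c) (hs0 : 0 < s) (hs1 : s < 1)
    (ht0 : 0 < t) (ht1 : t < 1) :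
    Real.sqrt (c - s^2) ≤ Real.sqrt (c - t^2) - t*(s-t)/Real.sqrt (c - t^2) := by
  have hcs : 0 < c - s^2 := by nlinarith
  have hct : 0 < c - t^2 := by nlinarith
  set B := Real.sqrt (c - t^2) with hBdef
  have hB : 0 < B := Real.sqrt_pos.mpr hct
  have hB2 : B^2 = c - t^2 := Real.sq_sqrt hct.le
  have key : Real.sqrt (c - s^2) * B ≤ c - s*t := by
    have h1 : Real.sqrt (c - s^2) * B = Real.sqrt ((c - s^2) * (c - t^2)) :=
      (Real.sqrt_mul hcs.le _).symm
    rw [h1]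
    have h2 : (c - s^2) * (c - t^2) ≤ (c - s*t)^2 := by
      nlinarith [mul_nonneg (by linarith : (0:ℝ) ≤ c) (sq_nonneg (s - t))]
    calc Real.sqrt ((c - s^2) * (c - t^2)) ≤ Real.sqrt ((c - s*t)^2) :=
          Real.sqrt_le_sqrt h2
      _ = c - s*t := Real.sqrt_sq (by nlinarith)
  have hrw : B - t*(s-t)/B = (B^2 - t*(s-t))/B := by
    field_simp
  rw [hrw, le_div_iff₀ hB]
  nlinarith [key]

theorem stmt_1 (β h τ : ℝ) (hβ : 1 < β) (hh : 0 < h) (hτ : 0 < τ)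
    (σ L : ℝ → ℝ)
    (hrange : ∀ q ∈ Set.Icc (0 : ℝ) τ, σ q ∈ Set.Ioo (0 : ℝ) 1)
    (heq : ∀ q ∈ Set.Icc (0 : ℝ) τ,
      (τ - q) * σ q / Real.sqrt (1 - (σ q) ^ 2)
        + q * σ q / Real.sqrt (β ^ 2 - (σ q) ^ 2) = h)
    (hL : ∀ q : ℝ, L q = (τ - q) / Real.sqrt (1 - (σ q) ^ 2)
        + β ^ 2 * q / Real.sqrt (β ^ 2 - (σ q) ^ 2)) :
    StrictMonoOn L (Set.Ioo 0 τ) := by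
  -- reformulation of L
  have Lform : ∀ q ∈ Set.Icc (0 : ℝ) τ,
      L q = (τ - q) * Real.sqrt (1 - (σ q) ^ 2)
        + q * Real.sqrt (β ^ 2 - (σ q) ^ 2) + σ q * h := by
    intro q hq
    have hr := hrange q hq
    have he := heq q hq
    have h1 : 0 < 1 - (σ q) ^ 2 := by nlinarith [hr.1, hr.2]
    have h2 : 0 < β ^ 2 - (σ q) ^ 2 := by nlinarith [hr.1, hr.2]
    have hu : 0 < Real.sqrt (1 - (σ q) ^ 2) := Real.sqrt_pos.mpr h1
    have hv : 0 < Real.sqrt (β ^ 2 - (σ q) ^ 2) := Real.sqrt_pos.mpr h2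
    have hu2 : Real.sqrt (1 - (σ q) ^ 2) ^ 2 = 1 - (σ q) ^ 2 := Real.sq_sqrt h1.le
    have hv2 : Real.sqrt (β ^ 2 - (σ q) ^ 2) ^ 2 = β ^ 2 - (σ q) ^ 2 := Real.sq_sqrt h2.le
    have e1 : (τ - q) / Real.sqrt (1 - (σ q) ^ 2)
        = (τ - q) * Real.sqrt (1 - (σ q) ^ 2)
          + σ q * ((τ - q) * σ q / Real.sqrt (1 - (σ q) ^ 2)) := by
      field_simp
      linear_combination (-(τ - q)) * hu2
    have e2 : β ^ 2 * q / Real.sqrt (β ^ 2 - (σ q) ^ 2)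
        = q * Real.sqrt (β ^ 2 - (σ q) ^ 2)
          + σ q * (q * σ q / Real.sqrt (β ^ 2 - (σ q) ^ 2)) := by
      field_simp
      linear_combination (-q) * hv2
    rw [hL, ← he, e1, e2]
    ring
  intro q1 hq1 q2 hq2 h12
  have hq1' : q1 ∈ Set.Icc (0 : ℝ) τ := ⟨hq1.1.le, hq1.2.le⟩
  have hq2' : q2 ∈ Set.Icc (0 : ℝ) τ := ⟨hq2.1.le, hq2.2.le⟩
  have hr1 := hrange q1 hq1'
  have hr2 := hrange q2 hq2'
  set s1 := σ q1 with hs1def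
  set s2 := σ q2 with hs2def
  have hβ2 : (1:ℝ) ≤ β ^ 2 := by nlinarith
  have c1 := aux_concave 1 s1 s2 le_rfl hr1.1 hr1.2 hr2.1 hr2.2
  have c2 := aux_concave (β ^ 2) s1 s2 hβ2 hr1.1 hr1.2 hr2.1 hr2.2
  have he2 := heq q2 hq2'
  have key : (τ - q2) * (s2 * (s1 - s2) / Real.sqrt (1 - s2 ^ 2))
      + q2 * (s2 * (s1 - s2) / Real.sqrt (β ^ 2 - s2 ^ 2)) = (s1 - s2) * h := by
    rw [← he2]; ring
  have A := mul_le_mul_of_nonneg_left c1 (by linarith [hq2.2] : (0:ℝ) ≤ τ - q2)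
  have B := mul_le_mul_of_nonneg_left c2 (le_of_lt hq2.1)
  have step1 : (τ - q2) * Real.sqrt (1 - s1 ^ 2) + q2 * Real.sqrt (β ^ 2 - s1 ^ 2)
      + s1 * h ≤ L q2 := by
    rw [Lform q2 hq2']
    have h1' : (1:ℝ) = 1 ^ 2 := by norm_num
    nlinarith [A, B, key]
  have step2 : (τ - q2) * Real.sqrt (1 - s1 ^ 2) + q2 * Real.sqrt (β ^ 2 - s1 ^ 2)
      + s1 * h
      = L q1 + (q2 - q1) * (Real.sqrt (β ^ 2 - s1 ^ 2) - Real.sqrt (1 - s1 ^ 2)) := by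
    rw [Lform q1 hq1']; ring
  have step3 : Real.sqrt (1 - s1 ^ 2) < Real.sqrt (β ^ 2 - s1 ^ 2) := by
    apply Real.sqrt_lt_sqrt (by nlinarith [hr1.1, hr1.2]) (by nlinarith)
  nlinarith [step1, step2, step3]
end

section
/- Let β > 1. For t ≥ 0 define q(t) = ⌊t+1⌋/2 if ⌊t⌋ is odd, and q(t) = t - ⌊t⌋/2 if ⌊t⌋ is even; let p(t) = t + 1 - q(t). Let σ(t) ∈ (0,1) be implicitly defined by p(t)·σ/√(1-σ²) + q(t)·σ/√(β²-σ²) = 1. Then t ↦ σ(t) is strictly decreasing on [0, +∞), σ(0) = 1/√2, and σ(t) → 0 as t → +∞. -/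
open Real Filter

noncomputable def qth (t : ℝ) : ℝ :=
  if Odd ⌊t⌋ then (⌊t + 1⌋ : ℝ) / 2 else t - (⌊t⌋ : ℝ) / 2

noncomputable def pth (t : ℝ) : ℝ := t + 1 - qth t

lemma qth_eq (t : ℝ) :
    qth t = min (t - (⌊t / 2⌋ : ℝ)) ((⌊t / 2⌋ : ℝ) + 1) := by
  rcases Int.even_or_odd ⌊t⌋ with ⟨k, hk⟩ | ⟨k, hk⟩
  · -- ⌊t⌋ = 2k
    have hk' : ⌊t⌋ = 2 * k := by omega
    have h1 : (2 * k : ℝ) ≤ t := by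
      have := Int.floor_le t; rw [hk'] at this; push_cast at this; linarith
    have h2 : t < 2 * k + 1 := by
      have := Int.lt_floor_add_one t; rw [hk'] at this; push_cast at this; linarith
    have hfl : ⌊t / 2⌋ = k := by
      rw [Int.floor_eq_iff]
      constructor <;> [skip; skip] <;> push_cast <;> linarith
    have hodd : ¬ Odd ⌊t⌋ := by rw [hk']; simp [Int.even_mul, parity_simps]
    rw [qth, if_neg hodd, hfl, hk']
    push_cast
    rw [min_eq_left (by linarith)]
    ring
  · -- ⌊t⌋ = 2k+1
    have h1 : (2 * k + 1 : ℝ) ≤ t := by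
      have := Int.floor_le t; rw [hk] at this; push_cast at this; linarith
    have h2 : t < 2 * k + 2 := by
      have := Int.lt_floor_add_one t; rw [hk] at this; push_cast at this; linarith
    have hfl : ⌊t / 2⌋ = k := by
      rw [Int.floor_eq_iff]
      constructor <;> [skip; skip] <;> push_cast <;> linarith
    have hodd : Odd ⌊t⌋ := ⟨k, by omega⟩
    have hfl1 : ⌊t + 1⌋ = 2 * k + 2 := by
      rw [Int.floor_eq_iff]
      constructor <;> [skip; skip] <;> push_cast <;> linarith
    rw [qth, if_pos hodd, hfl, hfl1]
    push_cast
    rw [min_eq_right (by linarith)]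
    ring

lemma pth_eq (t : ℝ) :
    pth t = max (t - (⌊t / 2⌋ : ℝ)) ((⌊t / 2⌋ : ℝ) + 1) := by
  rw [pth, qth_eq]
  rcases le_total (t - (⌊t / 2⌋ : ℝ)) ((⌊t / 2⌋ : ℝ) + 1) with h | h
  · rw [min_eq_left h, max_eq_right h]; ring
  · rw [min_eq_right h, max_eq_left h]; ring

lemma floor_half_le (t : ℝ) : (⌊t / 2⌋ : ℝ) ≤ t / 2 := Int.floor_le _

lemma lt_floor_half (t : ℝ) : t / 2 < (⌊t / 2⌋ : ℝ) + 1 := Int.lt_floor_add_one _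

lemma qth_nonneg {t : ℝ} (ht : 0 ≤ t) : 0 ≤ qth t := by
  rw [qth_eq]
  have h1 := floor_half_le t
  have h2 : (0 : ℝ) ≤ (⌊t / 2⌋ : ℝ) := by
    have : (0 : ℤ) ≤ ⌊t / 2⌋ := Int.floor_nonneg.2 (by linarith)
    exact_mod_cast this
  exact le_min (by linarith) (by linarith)

lemma qth_le_pth (t : ℝ) : qth t ≤ pth t := by
  rw [qth_eq, pth_eq]; exact min_le_max

lemma pth_add_qth (t : ℝ) : pth t + qth t = t + 1 := by rw [pth]; ring

lemma half_le_pth (t : ℝ) : (t + 1) / 2 ≤ pth t := by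
  have h := qth_le_pth t
  have h2 := pth_add_qth t
  linarith

lemma qth_mono {s t : ℝ} (h : s ≤ t) : qth s ≤ qth t := by
  rw [qth_eq, qth_eq]
  have hk : ⌊s / 2⌋ ≤ ⌊t / 2⌋ := Int.floor_le_floor (by linarith)
  rcases eq_or_lt_of_le hk with he | hlt
  · rw [he]
    exact min_le_min (by linarith) le_rfl
  · have hk1 : (⌊s / 2⌋ : ℝ) + 1 ≤ (⌊t / 2⌋ : ℝ) := by exact_mod_cast hlt
    have h1 : (⌊t / 2⌋ : ℝ) ≤ t / 2 := floor_half_le t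
    refine le_min ?_ ?_
    · exact le_trans (min_le_right _ _) (by linarith)
    · exact le_trans (min_le_right _ _) (by linarith)

lemma pth_mono {s t : ℝ} (h : s ≤ t) : pth s ≤ pth t := by
  rw [pth_eq, pth_eq]
  have hk : ⌊s / 2⌋ ≤ ⌊t / 2⌋ := Int.floor_le_floor (by linarith)
  rcases eq_or_lt_of_le hk with he | hlt
  · rw [he]
    exact max_le_max (by linarith) le_rfl
  · have hk1 : (⌊s / 2⌋ : ℝ) + 1 ≤ (⌊t / 2⌋ : ℝ) := by exact_mod_cast hlt
    have h1 : s / 2 < (⌊s / 2⌋ : ℝ) + 1 := lt_floor_half s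
    refine max_le ?_ ?_
    · exact le_trans (by linarith) (le_max_right _ _)
    · exact le_trans (by linarith : (⌊s / 2⌋ : ℝ) + 1 ≤ (⌊t / 2⌋ : ℝ) + 1) (le_max_right _ _)

theorem stmt_2 (β : ℝ) (hβ : 1 < β) (σ : ℝ → ℝ)
    (hrange : ∀ t : ℝ, 0 ≤ t → σ t ∈ Set.Ioo (0 : ℝ) 1)
    (heq : ∀ t : ℝ, 0 ≤ t →
      pth t * σ t / Real.sqrt (1 - (σ t) ^ 2)
        + qth t * σ t / Real.sqrt (β ^ 2 - (σ t) ^ 2) = 1) :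
    StrictAntiOn σ (Set.Ici 0) ∧ σ 0 = 1 / Real.sqrt 2 ∧
      Tendsto σ atTop (nhds 0) := by
  have hβ2 : (1:ℝ) < β ^ 2 := by nlinarith
  -- basic facts about A s = s / √(1-s²), B s = s / √(β²-s²)
  set A : ℝ → ℝ := fun s => s / Real.sqrt (1 - s ^ 2) with hA
  set B : ℝ → ℝ := fun s => s / Real.sqrt (β ^ 2 - s ^ 2) with hB
  have hden1 : ∀ s : ℝ, s ∈ Set.Ioo (0:ℝ) 1 → 0 < Real.sqrt (1 - s ^ 2) := by
    intro s hs
    exact Real.sqrt_pos.2 (by nlinarith [hs.1, hs.2])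
  have hden2 : ∀ s : ℝ, s ∈ Set.Ioo (0:ℝ) 1 → 0 < Real.sqrt (β ^ 2 - s ^ 2) := by
    intro s hs
    exact Real.sqrt_pos.2 (by nlinarith [hs.1, hs.2])
  have hBpos : ∀ s : ℝ, s ∈ Set.Ioo (0:ℝ) 1 → 0 < B s := by
    intro s hs; exact div_pos hs.1 (hden2 s hs)
  have hBleA : ∀ s : ℝ, s ∈ Set.Ioo (0:ℝ) 1 → B s ≤ A s := by
    intro s hs
    apply div_le_div_of_nonneg_left hs.1.le (hden1 s hs)
    exact Real.sqrt_le_sqrt (by nlinarith [hs.1])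
  have hAmono : ∀ s u : ℝ, s ∈ Set.Ioo (0:ℝ) 1 → u ∈ Set.Ioo (0:ℝ) 1 → s ≤ u →
      A s ≤ A u := by
    intro s u hs hu hsu
    apply div_le_div₀ hu.1.le hsu (hden1 u hu)
    exact Real.sqrt_le_sqrt (by nlinarith [mul_self_le_mul_self hs.1.le hsu])
  have hBmono : ∀ s u : ℝ, s ∈ Set.Ioo (0:ℝ) 1 → u ∈ Set.Ioo (0:ℝ) 1 → s ≤ u →
      B s ≤ B u := by
    intro s u hs hu hsu
    apply div_le_div₀ hu.1.le hsu (hden2 u hu)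
    exact Real.sqrt_le_sqrt (by nlinarith [mul_self_le_mul_self hs.1.le hsu])
  have heq' : ∀ t : ℝ, 0 ≤ t → pth t * A (σ t) + qth t * B (σ t) = 1 := by
    intro t ht
    have := heq t ht
    rw [hA, hB]
    dsimp only
    rw [← mul_div_assoc, ← mul_div_assoc]
    exact this
  have hanti : StrictAntiOn σ (Set.Ici 0) := by
    intro a ha b hb hab
    by_contra hcon
    push_neg at hcon
    have hsa := hrange a ha
    have hsb := hrange b hb
    have h1 : pth a * A (σ a) + qth a * B (σ a) = 1 := heq' a ha
    have h2 : pth b * A (σ b) + qth b * B (σ b) = 1 := heq' b hb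
    have hp : pth a ≤ pth b := pth_mono hab.le
    have hq : qth a ≤ qth b := qth_mono hab.le
    have hsum : pth b + qth b - (pth a + qth a) = b - a := by
      rw [pth_add_qth, pth_add_qth]; ring
    have hBa : 0 < B (σ a) := hBpos _ hsa
    have hAB : B (σ a) ≤ A (σ a) := hBleA _ hsa
    have step1 : pth a * A (σ a) + qth a * B (σ a)
        < pth b * A (σ a) + qth b * B (σ a) := by
      nlinarith [mul_le_mul_of_nonneg_left hAB (sub_nonneg.2 hp)]
    have step2 : pth b * A (σ a) + qth b * B (σ a)
        ≤ pth b * A (σ b) + qth b * B (σ b) := by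
      have hb' : (0:ℝ) ≤ b := hb
      have hpb : (0:ℝ) ≤ pth b := by have := half_le_pth b; linarith
      have hqb : (0:ℝ) ≤ qth b := qth_nonneg hb'
      exact add_le_add
        (mul_le_mul_of_nonneg_left (hAmono _ _ hsa hsb hcon) hpb)
        (mul_le_mul_of_nonneg_left (hBmono _ _ hsa hsb hcon) hqb)
    linarith
  refine ⟨hanti, ?_, ?_⟩
  · -- σ 0 = 1/√2
    have h0 : qth 0 = 0 := by
      rw [qth]; norm_num
    have hp0 : pth 0 = 1 := by rw [pth, h0]; ring
    have hs0 := hrange 0 le_rfl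
    have he0 := heq 0 le_rfl
    rw [h0, hp0] at he0
    simp only [one_mul, zero_mul, zero_div, add_zero] at he0
    have hd : 0 < Real.sqrt (1 - σ 0 ^ 2) := hden1 _ hs0
    have : σ 0 = Real.sqrt (1 - σ 0 ^ 2) := by
      field_simp at he0
      exact he0
    have hsq : σ 0 ^ 2 = 1 - σ 0 ^ 2 := by
      nth_rewrite 1 [this]
      rw [Real.sq_sqrt (by nlinarith [hs0.1, hs0.2])]
    have h12 : σ 0 ^ 2 = 1 / 2 := by linarith
    have : σ 0 = Real.sqrt (1 / 2) := by
      rw [← h12, Real.sqrt_sq hs0.1.le]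
    rw [this, one_div, one_div, Real.sqrt_inv]
  · -- tendsto 0
    have hbound : ∀ t : ℝ, 0 ≤ t → σ t ≤ 2 / (t + 1) := by
      intro t ht
      have hst := hrange t ht
      have hd1 := hden1 _ hst
      have hd2 := hden2 _ hst
      have hterm2 : 0 ≤ qth t * σ t / Real.sqrt (β ^ 2 - (σ t) ^ 2) :=
        div_nonneg (mul_nonneg (qth_nonneg ht) hst.1.le) hd2.le
      have h1 : pth t * σ t / Real.sqrt (1 - (σ t) ^ 2) ≤ 1 := by
        have := heq t ht; linarith
      have hsle : Real.sqrt (1 - (σ t) ^ 2) ≤ 1 := by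
        have h := Real.sqrt_le_sqrt (show 1 - (σ t) ^ 2 ≤ 1 by nlinarith [hst.1])
        simpa using h
      have hppos : 0 < pth t := lt_of_lt_of_le (by linarith) (half_le_pth t)
      have h2 : pth t * σ t ≤ 1 := by
        have hnum : 0 ≤ pth t * σ t := mul_nonneg hppos.le hst.1.le
        calc pth t * σ t = pth t * σ t * 1 := by ring
          _ ≤ pth t * σ t / Real.sqrt (1 - (σ t) ^ 2) := by
              rw [mul_one, le_div_iff₀ hd1]
              exact mul_le_of_le_one_right hnum hsle
          _ ≤ 1 := h1
      have h3 : (t + 1) / 2 * σ t ≤ 1 := by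
        have := mul_le_mul_of_nonneg_right (half_le_pth t) hst.1.le
        linarith
      rw [le_div_iff₀ (by linarith : (0:ℝ) < t + 1)]
      linarith
    apply tendsto_of_tendsto_of_tendsto_of_le_of_le'
      (tendsto_const_nhds (x := (0:ℝ)))
      (Tendsto.div_atTop (tendsto_const_nhds (x := (2:ℝ)))
        (tendsto_atTop_add_const_right atTop 1 tendsto_id))
    · filter_upwards [eventually_ge_atTop (0:ℝ)] with t ht
      exact (hrange t ht).1.le
    · filter_upwards [eventually_ge_atTop (0:ℝ)] with t ht
      exact hbound t ht
end

section
/- Let β > 1 and define the normalized length l(t,β) = p(t)/√(1-σ²) + β²·q(t)/√(β²-σ²) - t - √2, where σ = σ(t,β) is implicitly defined by p(t)·σ/√(1-σ²) + q(t)·σ/√(β²-σ²) = 1, with q(t) = ⌊t+1⌋/2 if ⌊t⌋ odd, q(t) = t - ⌊t⌋/2 if ⌊t⌋ even, p(t) = t+1-q(t). Then for t in any interval (2k+1, 2k+2), k ∈ ℕ, the derivative l_t(t,β) = √(1-σ(t,β)²) - 1, and hence l(·,β) is strictly decreasing on each such interval. -/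
open Real

section AuxLemmasForStmt4

set_option maxHeartbeats 1000000

open Filter

lemma auxCS (c x y : ℝ) (hx : x^2 ≤ c) (hy : y^2 < c) (hx0 : 0 ≤ x) (hy0 : 0 ≤ y) :
    Real.sqrt (c - x^2) * Real.sqrt (c - y^2) ≤ c - x*y := by
  have h1 : 0 ≤ c - x^2 := by linarith
  have key : (c - x^2) * (c - y^2) ≤ (c - x*y)^2 := by nlinarith [sq_nonneg (x - y)]
  calc Real.sqrt (c - x^2) * Real.sqrt (c - y^2)
      = Real.sqrt ((c - x^2) * (c - y^2)) := (Real.sqrt_mul h1 _).symm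
    _ ≤ Real.sqrt ((c - x*y)^2) := Real.sqrt_le_sqrt key
    _ = c - x*y := by rw [Real.sqrt_sq (by nlinarith [sq_nonneg (x-y)])]

lemma keyIneq (b P' Q s s' : ℝ) (hb : 1 < b) (hQ : 0 ≤ Q) (hP' : 0 ≤ P')
    (hs0 : 0 ≤ s) (hs1 : s < 1) (hs'0 : 0 < s') (hs'1 : s' < 1)
    (hc' : P' * s' / Real.sqrt (1 - s'^2) + Q * s' / Real.sqrt (b^2 - s'^2) = 1) :
    P' * Real.sqrt (1 - s^2) + Q * Real.sqrt (b^2 - s^2) + s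
      ≤ P' / Real.sqrt (1 - s'^2) + b^2 * Q / Real.sqrt (b^2 - s'^2) := by
  have h1' : (0:ℝ) < 1 - s'^2 := by nlinarith
  have h2' : (0:ℝ) < b^2 - s'^2 := by nlinarith
  have h1 : s^2 ≤ 1 := by nlinarith
  have h2 : s^2 ≤ b^2 := by nlinarith
  set c1 := Real.sqrt (1 - s'^2) with hc1def
  set c2 := Real.sqrt (b^2 - s'^2) with hc2def
  have hc1p : 0 < c1 := Real.sqrt_pos.2 h1'
  have hc2p : 0 < c2 := Real.sqrt_pos.2 h2'
  have hc1 : c1^2 = 1 - s'^2 := Real.sq_sqrt h1'.le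
  have hc2 : c2^2 = b^2 - s'^2 := Real.sq_sqrt h2'.le
  have e1 : Real.sqrt (1 - s^2) ≤ (1 - s*s') / c1 := by
    rw [le_div_iff₀ hc1p]
    exact auxCS 1 s s' h1 (by linarith) hs0 hs'0.le
  have e2 : Real.sqrt (b^2 - s^2) ≤ (b^2 - s*s') / c2 := by
    rw [le_div_iff₀ hc2p]
    exact auxCS (b^2) s s' h2 (by linarith) hs0 hs'0.le
  have step : P' * Real.sqrt (1 - s^2) + Q * Real.sqrt (b^2 - s^2) + s
      ≤ P' * ((1 - s*s') / c1) + Q * ((b^2 - s*s') / c2) + s := by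
    gcongr
  refine step.trans (le_of_eq ?_)
  field_simp at hc' ⊢
  linear_combination (-s) * hc'


lemma ident (b P Q s : ℝ) (hb : 1 < b) (hs0 : 0 < s) (hs1 : s < 1)
    (hc : P * s / Real.sqrt (1 - s^2) + Q * s / Real.sqrt (b^2 - s^2) = 1) :
    P / Real.sqrt (1 - s^2) + b^2 * Q / Real.sqrt (b^2 - s^2)
      = P * Real.sqrt (1 - s^2) + Q * Real.sqrt (b^2 - s^2) + s := by
  have h1 : (0:ℝ) < 1 - s^2 := by nlinarith
  have h2 : (0:ℝ) < b^2 - s^2 := by nlinarith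
  set d1 := Real.sqrt (1 - s^2) with hd1def
  set d2 := Real.sqrt (b^2 - s^2) with hd2def
  have hd1 : d1^2 = 1 - s^2 := Real.sq_sqrt h1.le
  have hd2 : d2^2 = b^2 - s^2 := Real.sq_sqrt h2.le
  have hd1p : 0 < d1 := Real.sqrt_pos.2 h1
  have hd2p : 0 < d2 := Real.sqrt_pos.2 h2
  field_simp at hc ⊢
  linear_combination s * hc - P * d2 * hd1 - Q * d1 * hd2


lemma monoG (c x y : ℝ) (hx0 : 0 ≤ x) (hxy : x ≤ y) (hy : y^2 < c) :
    x / Real.sqrt (c - x^2) ≤ y / Real.sqrt (c - y^2) := by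
  have hy0 : 0 ≤ y := hx0.trans hxy
  have hx2 : x^2 ≤ y^2 := by nlinarith
  have hxc : x^2 < c := lt_of_le_of_lt hx2 hy
  have hdx : 0 < Real.sqrt (c - x^2) := Real.sqrt_pos.2 (by linarith)
  have hdy : 0 < Real.sqrt (c - y^2) := Real.sqrt_pos.2 (by linarith)
  rw [div_le_div_iff₀ hdx hdy]
  have h : x^2 * (c - y^2) ≤ y^2 * (c - x^2) := by nlinarith
  have := Real.sqrt_le_sqrt h
  rwa [Real.sqrt_mul (sq_nonneg x), Real.sqrt_mul (sq_nonneg y),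
    Real.sqrt_sq hx0, Real.sqrt_sq hy0] at this

lemma monoGs (c x y : ℝ) (hx0 : 0 ≤ x) (hxy : x < y) (hy : y^2 < c) (hc : 0 < c) :
    x / Real.sqrt (c - x^2) < y / Real.sqrt (c - y^2) := by
  have hy0 : 0 ≤ y := hx0.trans hxy.le
  have hx2 : x^2 < y^2 := by nlinarith
  have hxc : x^2 < c := lt_trans hx2 hy
  have hdx : 0 < Real.sqrt (c - x^2) := Real.sqrt_pos.2 (by linarith)
  have hdy : 0 < Real.sqrt (c - y^2) := Real.sqrt_pos.2 (by linarith)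
  rw [div_lt_div_iff₀ hdx hdy]
  have h : x^2 * (c - y^2) < y^2 * (c - x^2) := by nlinarith
  have := Real.sqrt_lt_sqrt (by nlinarith) h
  rwa [Real.sqrt_mul (sq_nonneg x), Real.sqrt_mul (sq_nonneg y),
    Real.sqrt_sq hx0, Real.sqrt_sq hy0] at this

lemma lip (b Q P P' s s' : ℝ) (hb : 1 < b) (hQ : 0 < Q) (hP : 1 ≤ P) (hPP' : P ≤ P')
    (hs0 : 0 < s) (hs1 : s < 1) (hs'0 : 0 < s') (hs'1 : s' < 1)
    (hc : P * s / Real.sqrt (1 - s^2) + Q * s / Real.sqrt (b^2 - s^2) = 1)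
    (hc' : P' * s' / Real.sqrt (1 - s'^2) + Q * s' / Real.sqrt (b^2 - s'^2) = 1) :
    s' ≤ s ∧ s - s' ≤ P' - P := by
  have hb0 : (0:ℝ) < b := by linarith
  have hP0 : (0:ℝ) < P := by linarith
  have h1 : (0:ℝ) < 1 - s^2 := by nlinarith
  have h1' : (0:ℝ) < 1 - s'^2 := by nlinarith
  have h2 : (0:ℝ) < b^2 - s^2 := by nlinarith
  have h2' : (0:ℝ) < b^2 - s'^2 := by nlinarith
  have hd1 : 0 < Real.sqrt (1 - s^2) := Real.sqrt_pos.2 h1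
  have hc1 : 0 < Real.sqrt (1 - s'^2) := Real.sqrt_pos.2 h1'
  have hss' : s' ≤ s := by
    by_contra hlt
    push_neg at hlt
    have m1 : s / Real.sqrt (1 - s^2) < s' / Real.sqrt (1 - s'^2) :=
      monoGs 1 s s' hs0.le hlt (by nlinarith) one_pos
    have m2 : s / Real.sqrt (b^2 - s^2) < s' / Real.sqrt (b^2 - s'^2) :=
      monoGs (b^2) s s' hs0.le hlt (by nlinarith) (by positivity)
    have i1 : P * s / Real.sqrt (1 - s^2) < P' * s' / Real.sqrt (1 - s'^2) := by
      rw [mul_div_assoc, mul_div_assoc]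
      calc P * (s / Real.sqrt (1 - s^2)) < P * (s' / Real.sqrt (1 - s'^2)) :=
            mul_lt_mul_of_pos_left m1 hP0
        _ ≤ P' * (s' / Real.sqrt (1 - s'^2)) :=
            mul_le_mul_of_nonneg_right hPP' (by positivity)
    have i2 : Q * s / Real.sqrt (b^2 - s^2) < Q * s' / Real.sqrt (b^2 - s'^2) := by
      rw [mul_div_assoc, mul_div_assoc]
      exact mul_lt_mul_of_pos_left m2 hQ
    linarith
  refine ⟨hss', ?_⟩
  have mA : s' / Real.sqrt (1 - s'^2) ≤ s / Real.sqrt (1 - s^2) :=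
    monoG 1 s' s hs'0.le hss' (by nlinarith)
  have mB : s' / Real.sqrt (b^2 - s'^2) ≤ s / Real.sqrt (b^2 - s^2) :=
    monoG (b^2) s' s hs'0.le hss' (by nlinarith)
  have idt : P * (s / Real.sqrt (1 - s^2) - s' / Real.sqrt (1 - s'^2))
      + Q * (s / Real.sqrt (b^2 - s^2) - s' / Real.sqrt (b^2 - s'^2))
      = (P' - P) * (s' / Real.sqrt (1 - s'^2)) := by
    linear_combination hc - hc'
  have hAge : s / Real.sqrt (1 - s^2) - s' / Real.sqrt (1 - s'^2)
      ≤ (P' - P) * (s / Real.sqrt (1 - s^2)) := by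
    have hBn : 0 ≤ Q * (s / Real.sqrt (b^2 - s^2) - s' / Real.sqrt (b^2 - s'^2)) :=
      mul_nonneg hQ.le (by linarith)
    have h3 : (P' - P) * (s' / Real.sqrt (1 - s'^2)) ≤ (P' - P) * (s / Real.sqrt (1 - s^2)) :=
      mul_le_mul_of_nonneg_left mA (by linarith)
    nlinarith [mul_nonneg hQ.le (sub_nonneg.2 mB)]
  have hcd : Real.sqrt (1 - s^2) ≤ Real.sqrt (1 - s'^2) := by
    apply Real.sqrt_le_sqrt; nlinarith
  have h4 : s' / Real.sqrt (1 - s'^2) ≤ s' / Real.sqrt (1 - s^2) :=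
    div_le_div_of_nonneg_left hs'0.le hd1 hcd
  have h6 : (s - s') / Real.sqrt (1 - s^2) ≤ ((P' - P) * s) / Real.sqrt (1 - s^2) := by
    rw [sub_div, mul_div_assoc]
    linarith
  rw [div_le_div_iff₀ hd1 hd1] at h6
  nlinarith [h6, hd1, mul_nonneg (mul_nonneg (sub_nonneg.2 hPP') (by linarith : (0:ℝ) ≤ 1 - s)) hd1.le]

theorem stmt_4 (β : ℝ) (hβ : 1 < β) (σ l : ℝ → ℝ)
    (hrange : ∀ t : ℝ, 0 ≤ t → σ t ∈ Set.Ioo (0 : ℝ) 1)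
    (heq : ∀ t : ℝ, 0 ≤ t →
      pth t * σ t / Real.sqrt (1 - (σ t) ^ 2)
        + qth t * σ t / Real.sqrt (β ^ 2 - (σ t) ^ 2) = 1)
    (hl : ∀ t : ℝ, 0 ≤ t →
      l t = pth t / Real.sqrt (1 - (σ t) ^ 2)
        + β ^ 2 * qth t / Real.sqrt (β ^ 2 - (σ t) ^ 2) - t - Real.sqrt 2) :
    ∀ k : ℕ, (∀ t ∈ Set.Ioo (2 * (k : ℝ) + 1) (2 * (k : ℝ) + 2),
        HasDerivAt l (Real.sqrt (1 - (σ t) ^ 2) - 1) t) ∧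
      StrictAntiOn l (Set.Ioo (2 * (k : ℝ) + 1) (2 * (k : ℝ) + 2)) := by
  intro k
  set I : Set ℝ := Set.Ioo (2 * (k : ℝ) + 1) (2 * (k : ℝ) + 2) with hIdef
  have hk0 : (0:ℝ) ≤ (k:ℝ) := Nat.cast_nonneg k
  -- basic facts for points of I
  have hfacts : ∀ t ∈ I, 0 ≤ t ∧ qth t = (k:ℝ) + 1 ∧ pth t = t - k := by
    intro t ht
    obtain ⟨ht1, ht2⟩ := ht
    have ht0 : (0:ℝ) ≤ t := by linarith
    have hfl : ⌊t⌋ = 2*(k:ℤ)+1 := by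
      rw [Int.floor_eq_iff]
      constructor <;> push_cast <;> linarith
    have hfl1 : ⌊t+1⌋ = 2*(k:ℤ)+2 := by
      rw [Int.floor_eq_iff]
      constructor <;> push_cast <;> linarith
    have hodd : Odd ⌊t⌋ := by rw [hfl]; exact ⟨k, by ring⟩
    have hq : qth t = (k:ℝ) + 1 := by
      rw [qth, if_pos hodd, hfl1]; push_cast; ring
    exact ⟨ht0, hq, by rw [pth, hq]; ring⟩
  -- the structured data at each point
  have hdata : ∀ t ∈ I, 0 < σ t ∧ σ t < 1 ∧
      (t - k) * σ t / Real.sqrt (1 - (σ t)^2)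
        + ((k:ℝ) + 1) * σ t / Real.sqrt (β^2 - (σ t)^2) = 1 ∧
      l t = (t - k) / Real.sqrt (1 - (σ t)^2)
        + β^2 * ((k:ℝ) + 1) / Real.sqrt (β^2 - (σ t)^2) - t - Real.sqrt 2 := by
    intro t ht
    obtain ⟨ht0, hq, hp⟩ := hfacts t ht
    have hσ := hrange t ht0
    have hc := heq t ht0
    have hlt := hl t ht0
    rw [hq, hp] at hc hlt
    exact ⟨hσ.1, hσ.2, hc, hlt⟩
  -- the main inequality
  have main : ∀ t ∈ I, ∀ u ∈ I,
      (u - t) * (Real.sqrt (1 - (σ t)^2) - 1) ≤ l u - l t := by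
    intro t ht u hu
    obtain ⟨hσt0, hσt1, hct, hlt⟩ := hdata t ht
    obtain ⟨hσu0, hσu1, hcu, hlu⟩ := hdata u hu
    have hK := keyIneq β (u - k) ((k:ℝ) + 1) (σ t) (σ u) hβ (by linarith)
      (by obtain ⟨h1, h2⟩ := hu; linarith) hσt0.le hσt1 hσu0 hσu1 hcu
    have hI := ident β (t - k) ((k:ℝ) + 1) (σ t) hβ hσt0 hσt1 hct
    rw [hlu, hlt]
    nlinarith [hK, hI]
  have hsqlt : ∀ u ∈ I, Real.sqrt (1 - (σ u)^2) < 1 := by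
    intro u hu
    obtain ⟨hσu0, hσu1, -, -⟩ := hdata u hu
    calc Real.sqrt (1 - (σ u)^2) < Real.sqrt 1 :=
          Real.sqrt_lt_sqrt (by nlinarith) (by nlinarith)
      _ = 1 := Real.sqrt_one
  constructor
  · -- derivative
    intro t ht
    obtain ⟨hσt0, hσt1, hct, hlt⟩ := hdata t ht
    obtain ⟨hpt, hqt⟩ := hfacts t ht |>.2
    set dt : ℝ := Real.sqrt (1 - (σ t)^2) - 1 with hdtdef
    rw [hasDerivAt_iff_tendsto_slope]
    -- Lipschitz bound for σ near t
    have hσlip : ∀ u ∈ I, |σ u - σ t| ≤ |u - t| := by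
      intro u hu
      obtain ⟨hσu0, hσu1, hcu, -⟩ := hdata u hu
      obtain ⟨ht1, ht2⟩ := ht
      obtain ⟨hu1, hu2⟩ := hu
      rcases le_total t u with h | h
      · obtain ⟨h1, h2⟩ := lip β ((k:ℝ)+1) (t - k) (u - k) (σ t) (σ u) hβ
          (by linarith) (by linarith) (by linarith) hσt0 hσt1 hσu0 hσu1 hct hcu
        rw [abs_of_nonpos (by linarith), abs_of_nonneg (by linarith)]; linarith
      · obtain ⟨h1, h2⟩ := lip β ((k:ℝ)+1) (u - k) (t - k) (σ u) (σ t) hβ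
          (by linarith) (by linarith) (by linarith) hσu0 hσu1 hσt0 hσt1 hcu hct
        rw [abs_of_nonneg (by linarith), abs_of_nonpos (by linarith)]; linarith
    have hIev : ∀ᶠ u in nhdsWithin t {t}ᶜ, u ∈ I :=
      eventually_nhdsWithin_of_eventually_nhds
        (eventually_of_mem (isOpen_Ioo.mem_nhds ht) (fun x hx => hx))
    have hneev : ∀ᶠ u in nhdsWithin t {t}ᶜ, u ≠ t := by
      filter_upwards [self_mem_nhdsWithin] with u hu using hu
    -- tendsto of sigma
    have htendσ : Tendsto (fun u => σ u - σ t) (nhdsWithin t {t}ᶜ) (nhds 0) := by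
      apply squeeze_zero_norm' (a := fun u => |u - t|)
      · filter_upwards [hIev] with u hu
        simpa [Real.norm_eq_abs] using hσlip u hu
      · have h0 : Tendsto (fun u : ℝ => |u - t|) (nhds t) (nhds 0) := by
          have := ((continuous_id.sub (continuous_const (y := t))).abs).tendsto t
          simpa using this
        exact h0.mono_left nhdsWithin_le_nhds
    have htendσ' : Tendsto σ (nhdsWithin t {t}ᶜ) (nhds (σ t)) := by
      have := htendσ.add (tendsto_const_nhds (x := σ t) (f := nhdsWithin t {t}ᶜ))
      simpa using this
    have hF : Continuous (fun x : ℝ => Real.sqrt (1 - x^2)) :=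
      Real.continuous_sqrt.comp (by continuity)
    have htendg : Tendsto (fun u => |Real.sqrt (1 - (σ u)^2) - Real.sqrt (1 - (σ t)^2)|)
        (nhdsWithin t {t}ᶜ) (nhds 0) := by
      have h1 : Tendsto (fun u => Real.sqrt (1 - (σ u)^2)) (nhdsWithin t {t}ᶜ)
          (nhds (Real.sqrt (1 - (σ t)^2))) := (hF.tendsto (σ t)).comp htendσ'
      have := (h1.sub (tendsto_const_nhds (x := Real.sqrt (1 - (σ t)^2)))).abs
      simpa using this
    have hmainsq : Tendsto (fun u => slope l t u - dt) (nhdsWithin t {t}ᶜ) (nhds 0) := by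
      apply squeeze_zero_norm'
        (a := fun u => |Real.sqrt (1 - (σ u)^2) - Real.sqrt (1 - (σ t)^2)|) _ htendg
      filter_upwards [hIev, hneev] with u hu hut
      have hb1 := main t ht u hu
      rw [← hdtdef] at hb1
      have hb2 := main u hu t ht
      have hD : u - t ≠ 0 := sub_ne_zero.2 hut
      set du : ℝ := Real.sqrt (1 - (σ u)^2) - 1 with hdudef
      have hval0 : 0 ≤ (l u - l t) - (u - t) * dt := by linarith
      have hval1 : (l u - l t) - (u - t) * dt ≤ (u - t) * (du - dt) := by nlinarith
      have hs : slope l t u - dt = ((l u - l t) - (u - t) * dt) / (u - t) := by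
        rw [slope_def_field]
        field_simp
      rw [Real.norm_eq_abs, hs, abs_div]
      rw [div_le_iff₀ (abs_pos.2 hD)]
      have : |(l u - l t) - (u - t) * dt| ≤ |(u - t) * (du - dt)| := by
        rw [abs_of_nonneg hval0]
        exact hval1.trans (le_abs_self _)
      calc |(l u - l t) - (u - t) * dt| ≤ |(u - t) * (du - dt)| := this
        _ = |du - dt| * |u - t| := by rw [abs_mul, mul_comm]
        _ = |Real.sqrt (1 - (σ u)^2) - Real.sqrt (1 - (σ t)^2)| * |u - t| := by
            rw [hdudef, hdtdef]; ring_nf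
    have := hmainsq.add (tendsto_const_nhds (x := dt) (f := nhdsWithin t {t}ᶜ))
    simpa using this
  · -- strict antitone
    intro t ht u hu htu
    have h := main u hu t ht
    have hlt1 := hsqlt u hu
    have hprod : 0 < (t - u) * (Real.sqrt (1 - (σ u)^2) - 1) :=
      mul_pos_of_neg_of_neg (by linarith) (by linarith)
    linarith

end AuxLemmasForStmt4
end

section
/- Let β ≥ √(3/2) and define l(t,β) as the normalized Snell length as above. Then for t in any interval (2k, 2k+1), k ∈ ℕ, the derivative l_t(t,β) = √(β²-σ(t,β)²) - 1 > 0, so l(·,β) is strictly increasing on each such interval. -/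
open Real

lemma aux_bounds (β p q s a b : ℝ) (hβ2 : 3/2 ≤ β^2) (hp : 1 ≤ p) (hq : 0 < q)
    (hs0 : 0 < s) (hs1 : s < 1) (ha2 : a^2 = 1 - s^2) (ha0 : 0 < a)
    (hb2 : b^2 = β^2 - s^2) (hb0 : 0 < b)
    (he : p*s/a + q*s/b = 1) : s^2 < 1/2 ∧ 7/10 ≤ a ∧ a ≤ 1 ∧ 1 ≤ b := by
  have h1 : 0 < q*s/b := by positivity
  have h2 : p*s/a < 1 := by linarith
  have h3 : s/a < 1 := by
    calc s/a ≤ p*s/a := by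
          apply div_le_div_of_nonneg_right ?_ ha0.le
          nlinarith
    _ < 1 := h2
  have h4 : s < a := (div_lt_one ha0).mp h3
  have hs2 : s^2 < 1/2 := by nlinarith
  refine ⟨hs2, by nlinarith, by nlinarith, by nlinarith⟩

lemma lip_one (β p q q₀ s s₀ a b a₀ b₀ : ℝ) (hβ2 : 3/2 ≤ β^2) (hp : 1 ≤ p)
    (hq : 0 < q) (hq₀ : 0 < q₀)
    (hs0 : 0 < s) (hs1 : s < 1) (ha2 : a^2 = 1 - s^2) (ha0 : 0 < a)
    (hb2 : b^2 = β^2 - s^2) (hb0 : 0 < b)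
    (hs₀0 : 0 < s₀) (hs₀1 : s₀ < 1) (ha₀2 : a₀^2 = 1 - s₀^2) (ha₀0 : 0 < a₀)
    (hb₀2 : b₀^2 = β^2 - s₀^2) (hb₀0 : 0 < b₀)
    (he : p*s/a + q*s/b = 1) (he₀ : p*s₀/a₀ + q₀*s₀/b₀ = 1)
    (hss : s₀ ≤ s) : s - s₀ ≤ |q - q₀| := by
  obtain ⟨hs2, ha7, ha1, hb1⟩ := aux_bounds β p q s a b hβ2 hp hq hs0 hs1 ha2 ha0 hb2 hb0 he
  obtain ⟨hs₀2, ha₀7, ha₀1, hb₀1⟩ := aux_bounds β p q₀ s₀ a₀ b₀ hβ2 hp hq₀ hs₀0 hs₀1 ha₀2 ha₀0 hb₀2 hb₀0 he₀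
  -- g monotone with slope ≥ 1
  have hu_id : (s*a₀ - s₀*a) * (s*a₀ + s₀*a) = (s-s₀)*(s+s₀) := by
    linear_combination s^2*ha₀2 - s₀^2*ha2
  have hu0 : 0 ≤ s*a₀ - s₀*a := by
    have hpos : 0 < s*a₀ + s₀*a := by positivity
    have h0 : (0:ℝ)*(s*a₀+s₀*a) ≤ (s*a₀-s₀*a)*(s*a₀+s₀*a) := by
      rw [hu_id, zero_mul]
      exact mul_nonneg (by linarith) (by positivity)
    exact le_of_mul_le_mul_right h0 hpos
  have k1 : s*a₀ + s₀*a ≤ s + s₀ := by nlinarith [mul_le_of_le_one_right hs0.le ha₀1, mul_le_of_le_one_right hs₀0.le ha1]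
  have k2 : (s-s₀)*(s+s₀) ≤ (s*a₀-s₀*a)*(s+s₀) := by
    rw [← hu_id]
    exact mul_le_mul_of_nonneg_left k1 hu0
  have k3 : s - s₀ ≤ s*a₀ - s₀*a := le_of_mul_le_mul_right k2 (by positivity)
  have k0 : a*a₀ ≤ 1 := mul_le_one₀ ha1 ha₀0.le ha₀1
  have hg : s - s₀ ≤ s/a - s₀/a₀ := by
    rw [div_sub_div _ _ ha0.ne' ha₀0.ne', le_div_iff₀ (by positivity)]
    calc (s-s₀)*(a*a₀) ≤ (s-s₀)*1 := mul_le_mul_of_nonneg_left k0 (by linarith)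
    _ ≤ s*a₀ - a*s₀ := by linarith [k3, mul_comm a s₀]
  have hv0 : 0 ≤ s*b₀ - s₀*b := by
    have hv_id : (s*b₀ - s₀*b) * (s*b₀ + s₀*b) = β^2*((s-s₀)*(s+s₀)) := by
      linear_combination s^2*hb₀2 - s₀^2*hb2
    have hpos : 0 < s*b₀ + s₀*b := by positivity
    have h0 : (0:ℝ)*(s*b₀+s₀*b) ≤ (s*b₀-s₀*b)*(s*b₀+s₀*b) := by
      rw [hv_id, zero_mul]
      exact mul_nonneg (sq_nonneg β) (mul_nonneg (by linarith) (by positivity))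
    exact le_of_mul_le_mul_right h0 hpos
  have hw : 0 ≤ s/b - s₀/b₀ := by
    rw [div_sub_div _ _ hb0.ne' hb₀0.ne']
    exact div_nonneg (by linarith [hv0, mul_comm b s₀]) (by positivity)
  have h2 : p*(s/a - s₀/a₀) + q*(s/b - s₀/b₀) = (q₀-q)*(s₀/b₀) := by
    linear_combination he - he₀
  have h3 : (q₀-q)*(s₀/b₀) ≤ |q - q₀| := by
    have hw0 : 0 ≤ s₀/b₀ := by positivity
    have hw1 : s₀/b₀ ≤ 1 := by rw [div_le_one hb₀0]; linarith
    have h4 : q₀ - q ≤ |q-q₀| := by rw [abs_sub_comm]; exact le_abs_self _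
    calc (q₀-q)*(s₀/b₀) ≤ |q - q₀| * (s₀/b₀) := mul_le_mul_of_nonneg_right h4 hw0
    _ ≤ |q - q₀| * 1 := mul_le_mul_of_nonneg_left hw1 (abs_nonneg _)
    _ = |q - q₀| := mul_one _
  have hgn : 0 ≤ s/a - s₀/a₀ := le_trans (by linarith) hg
  have h1 : s - s₀ ≤ p*(s/a - s₀/a₀) := by
    calc s - s₀ ≤ 1*(s/a - s₀/a₀) := by linarith [hg]
    _ ≤ p*(s/a-s₀/a₀) := mul_le_mul_of_nonneg_right hp hgn
  linarith [h1, h2, h3, mul_nonneg hq.le hw]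

lemma lip_s5 (β p q q₀ s s₀ a b a₀ b₀ : ℝ) (hβ2 : 3/2 ≤ β^2) (hp : 1 ≤ p)
    (hq : 0 < q) (hq₀ : 0 < q₀)
    (hs0 : 0 < s) (hs1 : s < 1) (ha2 : a^2 = 1 - s^2) (ha0 : 0 < a)
    (hb2 : b^2 = β^2 - s^2) (hb0 : 0 < b)
    (hs₀0 : 0 < s₀) (hs₀1 : s₀ < 1) (ha₀2 : a₀^2 = 1 - s₀^2) (ha₀0 : 0 < a₀)
    (hb₀2 : b₀^2 = β^2 - s₀^2) (hb₀0 : 0 < b₀)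
    (he : p*s/a + q*s/b = 1) (he₀ : p*s₀/a₀ + q₀*s₀/b₀ = 1) :
    |s - s₀| ≤ |q - q₀| := by
  rcases le_total s₀ s with h | h
  · rw [abs_of_nonneg (by linarith)]
    exact lip_one β p q q₀ s s₀ a b a₀ b₀ hβ2 hp hq hq₀ hs0 hs1 ha2 ha0 hb2 hb0 hs₀0 hs₀1 ha₀2 ha₀0 hb₀2 hb₀0 he he₀ h
  · rw [abs_of_nonpos (by linarith), abs_sub_comm]
    have := lip_one β p q₀ q s₀ s a₀ b₀ a b hβ2 hp hq₀ hq hs₀0 hs₀1 ha₀2 ha₀0 hb₀2 hb₀0 hs0 hs1 ha2 ha0 hb2 hb0 he₀ he h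
    linarith

set_option maxHeartbeats 600000 in
lemma key_est (β p q q₀ s s₀ a b a₀ b₀ : ℝ) (hβ2 : 3/2 ≤ β^2) (hp : 1 ≤ p)
    (hq : 0 < q) (hq₀ : 0 < q₀)
    (hs0 : 0 < s) (hs1 : s < 1) (ha2 : a^2 = 1 - s^2) (ha0 : 0 < a)
    (hb2 : b^2 = β^2 - s^2) (hb0 : 0 < b)
    (hs₀0 : 0 < s₀) (hs₀1 : s₀ < 1) (ha₀2 : a₀^2 = 1 - s₀^2) (ha₀0 : 0 < a₀)
    (hb₀2 : b₀^2 = β^2 - s₀^2) (hb₀0 : 0 < b₀)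
    (he : p*s/a + q*s/b = 1) (he₀ : p*s₀/a₀ + q₀*s₀/b₀ = 1) :
    |(p/a + β^2*q/b) - (p/a₀ + β^2*q₀/b₀) - (q - q₀)*b₀|
      ≤ (1 + (3*p + β^2*q₀)/s₀) * (q - q₀)^2 := by
  obtain ⟨hs2, ha7, ha1, hb1⟩ := aux_bounds β p q s a b hβ2 hp hq hs0 hs1 ha2 ha0 hb2 hb0 he
  obtain ⟨hs₀2, ha₀7, ha₀1, hb₀1⟩ := aux_bounds β p q₀ s₀ a₀ b₀ hβ2 hp hq₀ hs₀0 hs₀1 ha₀2 ha₀0 hb₀2 hb₀0 he₀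
  have hd : |s - s₀| ≤ |q - q₀| :=
    lip_s5 β p q q₀ s s₀ a b a₀ b₀ hβ2 hp hq hq₀ hs0 hs1 ha2 ha0 hb2 hb0 hs₀0 hs₀1 ha₀2 ha₀0 hb₀2 hb₀0 he he₀
  -- cleared equation forms
  have hec : p*s*b + q*s*a = a*b := by
    have h := he
    field_simp at h
    linarith [h]
  have hec₀ : p*s₀*b₀ + q₀*s₀*a₀ = a₀*b₀ := by
    have h := he₀
    field_simp at h
    linarith [h]
  -- the envelope identity m = p*a + q*b + s
  have e1 : p/a + β^2*q/b = p*a + q*b + s := by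
    rw [div_add_div _ _ ha0.ne' hb0.ne', div_eq_iff (by positivity)]
    linear_combination (-(p*b))*ha2 - (q*a)*hb2 + s*hec
  have e1₀ : p/a₀ + β^2*q₀/b₀ = p*a₀ + q₀*b₀ + s₀ := by
    rw [div_add_div _ _ ha₀0.ne' hb₀0.ne', div_eq_iff (by positivity)]
    linear_combination (-(p*b₀))*ha₀2 - (q₀*a₀)*hb₀2 + s₀*hec₀
  -- T1 bound
  have hu_id : (s₀*a - s*a₀) * (s*a₀ + s₀*a) = -((s-s₀)*(s+s₀)) := by
    linear_combination s₀^2*ha2 - s^2*ha₀2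
  have habs : |s₀*a - s*a₀| * (s*a₀ + s₀*a) = |s - s₀| * (s + s₀) := by
    have e' : |s₀*a - s*a₀| * (s*a₀ + s₀*a) = |(s₀*a - s*a₀) * (s*a₀ + s₀*a)| := by
      rw [abs_mul, abs_of_pos (show (0:ℝ) < s*a₀ + s₀*a by positivity)]
    rw [e', hu_id, abs_neg, abs_mul, abs_of_pos (show (0:ℝ) < s + s₀ by positivity)]
  have hu2 : |s₀*a - s*a₀| * s₀ * (7/10) ≤ |s - s₀| * 2 := by
    have h1 : |s₀*a - s*a₀| * (s₀ * (7/10)) ≤ |s₀*a - s*a₀| * (s*a₀ + s₀*a) := by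
      apply mul_le_mul_of_nonneg_left _ (abs_nonneg _)
      have e2 : s₀ * (7/10) ≤ s₀ * a := mul_le_mul_of_nonneg_left ha7 hs₀0.le
      linarith [mul_nonneg hs0.le ha₀0.le]
    have h2 : |s - s₀| * (s + s₀) ≤ |s - s₀| * 2 := by
      apply mul_le_mul_of_nonneg_left (by linarith) (abs_nonneg _)
    calc |s₀*a - s*a₀| * s₀ * (7/10) = |s₀*a - s*a₀| * (s₀ * (7/10)) := by ring
    _ ≤ |s₀*a - s*a₀| * (s*a₀ + s₀*a) := h1
    _ = |s - s₀| * (s + s₀) := habs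
    _ ≤ |s - s₀| * 2 := h2
  have hT1e : s₀/a₀ - (s+s₀)/(a+a₀) = (s₀*a - s*a₀)/(a₀*(a+a₀)) := by
    field_simp
    ring
  have hT1 : |s₀/a₀ - (s+s₀)/(a+a₀)| * s₀ ≤ 3 * |s - s₀| := by
    rw [hT1e, abs_div, abs_of_pos (show (0:ℝ) < a₀*(a+a₀) by positivity),
      div_mul_eq_mul_div, div_le_iff₀ (show (0:ℝ) < a₀*(a+a₀) by positivity)]
    have hden : 49/50 ≤ a₀*(a+a₀) := by
      have e2 : (7:ℝ)/10 * (7/10 + 7/10) ≤ a₀*(a+a₀) :=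
        mul_le_mul ha₀7 (by linarith) (by norm_num) (by linarith)
      linarith
    calc |s₀*a - s*a₀| * s₀ = (|s₀*a - s*a₀| * s₀ * (7/10)) * (10/7) := by ring
    _ ≤ (|s - s₀| * 2) * (10/7) := by linarith [hu2]
    _ ≤ 3 * |s - s₀| * (49/50) := by linarith [abs_nonneg (s - s₀)]
    _ ≤ 3 * |s - s₀| * (a₀*(a+a₀)) := by
        apply mul_le_mul_of_nonneg_left hden (by positivity)
  -- T2 bound
  have hv_id : (s₀*b - s*b₀) * (s*b₀ + s₀*b) = -(β^2*((s-s₀)*(s+s₀))) := by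
    linear_combination s₀^2*hb2 - s^2*hb₀2
  have habs2 : |s₀*b - s*b₀| * (s*b₀ + s₀*b) = β^2 * (|s - s₀| * (s + s₀)) := by
    have e' : |s₀*b - s*b₀| * (s*b₀ + s₀*b) = |(s₀*b - s*b₀) * (s*b₀ + s₀*b)| := by
      rw [abs_mul, abs_of_pos (show (0:ℝ) < s*b₀ + s₀*b by positivity)]
    rw [e', hv_id, abs_neg, abs_mul, abs_mul, abs_of_nonneg (sq_nonneg β),
      abs_of_pos (show (0:ℝ) < s + s₀ by positivity)]
  have hv2 : |s₀*b - s*b₀| * s₀ ≤ 2 * β^2 * |s - s₀| := by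
    have h1 : |s₀*b - s*b₀| * (s₀ * 1) ≤ |s₀*b - s*b₀| * (s*b₀ + s₀*b) := by
      apply mul_le_mul_of_nonneg_left _ (abs_nonneg _)
      have e2 : s₀ * 1 ≤ s₀ * b := mul_le_mul_of_nonneg_left hb1 hs₀0.le
      linarith [mul_nonneg hs0.le hb₀0.le]
    have h2 : β^2 * (|s - s₀| * (s + s₀)) ≤ β^2 * (|s - s₀| * 2) := by
      apply mul_le_mul_of_nonneg_left _ (sq_nonneg β)
      apply mul_le_mul_of_nonneg_left (by linarith) (abs_nonneg _)
    calc |s₀*b - s*b₀| * s₀ = |s₀*b - s*b₀| * (s₀ * 1) := by ring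
    _ ≤ |s₀*b - s*b₀| * (s*b₀ + s₀*b) := h1
    _ = β^2 * (|s - s₀| * (s + s₀)) := habs2
    _ ≤ β^2 * (|s - s₀| * 2) := h2
    _ = 2 * β^2 * |s - s₀| := by ring
  have hT2e : s₀/b₀ - (s+s₀)/(b+b₀) = (s₀*b - s*b₀)/(b₀*(b+b₀)) := by
    field_simp
    ring
  have hT2 : |s₀/b₀ - (s+s₀)/(b+b₀)| * s₀ ≤ β^2 * |s - s₀| := by
    rw [hT2e, abs_div, abs_of_pos (show (0:ℝ) < b₀*(b+b₀) by positivity),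
      div_mul_eq_mul_div, div_le_iff₀ (show (0:ℝ) < b₀*(b+b₀) by positivity)]
    have hden : 2 ≤ b₀*(b+b₀) := by
      have e2 : (1:ℝ) * (1 + 1) ≤ b₀*(b+b₀) :=
        mul_le_mul hb₀1 (by linarith) (by norm_num) (by linarith)
      linarith
    calc |s₀*b - s*b₀| * s₀ ≤ 2 * β^2 * |s - s₀| := hv2
    _ = (β^2 * |s - s₀|) * 2 := by ring
    _ ≤ (β^2 * |s - s₀|) * (b₀*(b+b₀)) := by
        apply mul_le_mul_of_nonneg_left hden (by positivity)
    _ = β^2 * |s - s₀| * (b₀*(b+b₀)) := by ring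
  -- Δφ identity
  have h1 : a - a₀ = -((s-s₀)*(s+s₀))/(a+a₀) := by
    rw [eq_div_iff (by positivity)]
    linear_combination ha2 - ha₀2
  have h2 : b - b₀ = -((s-s₀)*(s+s₀))/(b+b₀) := by
    rw [eq_div_iff (by positivity)]
    linear_combination hb2 - hb₀2
  have hΔid : p*(a-a₀) + q₀*(b-b₀) + (s-s₀)
      = (s-s₀)*(p*(s₀/a₀-(s+s₀)/(a+a₀)) + q₀*(s₀/b₀-(s+s₀)/(b+b₀))) := by
    linear_combination p*h1 + q₀*h2 - (s-s₀)*he₀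
  -- Δφ bound
  have hR : |p*(s₀/a₀-(s+s₀)/(a+a₀)) + q₀*(s₀/b₀-(s+s₀)/(b+b₀))| * s₀
      ≤ (3*p + β^2*q₀) * |s - s₀| := by
    have htri := abs_add_le (p*(s₀/a₀-(s+s₀)/(a+a₀))) (q₀*(s₀/b₀-(s+s₀)/(b+b₀)))
    rw [abs_mul, abs_mul, abs_of_pos (show (0:ℝ) < p by linarith), abs_of_pos hq₀] at htri
    have hm := mul_le_mul_of_nonneg_right htri hs₀0.le
    calc |p*(s₀/a₀-(s+s₀)/(a+a₀)) + q₀*(s₀/b₀-(s+s₀)/(b+b₀))| * s₀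
        ≤ (p * |s₀/a₀-(s+s₀)/(a+a₀)| + q₀ * |s₀/b₀-(s+s₀)/(b+b₀)|) * s₀ := hm
    _ = p * (|s₀/a₀-(s+s₀)/(a+a₀)| * s₀) + q₀ * (|s₀/b₀-(s+s₀)/(b+b₀)| * s₀) := by ring
    _ ≤ p * (3 * |s - s₀|) + q₀ * (β^2 * |s - s₀|) := by
        apply add_le_add
        · exact mul_le_mul_of_nonneg_left hT1 (by linarith)
        · exact mul_le_mul_of_nonneg_left hT2 hq₀.le
    _ = (3*p + β^2*q₀) * |s - s₀| := by ring
  have hΔ : |p*(a-a₀) + q₀*(b-b₀) + (s-s₀)| ≤ ((3*p + β^2*q₀)/s₀) * (q - q₀)^2 := by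
    rw [hΔid, abs_mul, div_mul_eq_mul_div, le_div_iff₀ hs₀0]
    have e : |s - s₀| * |p*(s₀/a₀-(s+s₀)/(a+a₀)) + q₀*(s₀/b₀-(s+s₀)/(b+b₀))| * s₀
        = |s - s₀| * (|p*(s₀/a₀-(s+s₀)/(a+a₀)) + q₀*(s₀/b₀-(s+s₀)/(b+b₀))| * s₀) := by ring
    rw [e]
    calc |s - s₀| * (|p*(s₀/a₀-(s+s₀)/(a+a₀)) + q₀*(s₀/b₀-(s+s₀)/(b+b₀))| * s₀)
        ≤ |s - s₀| * ((3*p + β^2*q₀) * |s - s₀|) := mul_le_mul_of_nonneg_left hR (abs_nonneg _)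
    _ = (3*p + β^2*q₀) * (|s - s₀| * |s - s₀|) := by ring
    _ ≤ (3*p + β^2*q₀) * (|q - q₀| * |q - q₀|) := by
        apply mul_le_mul_of_nonneg_left _ (by linarith [mul_nonneg (sq_nonneg β) hq₀.le])
        exact mul_le_mul hd hd (abs_nonneg _) (abs_nonneg _)
    _ = (3*p + β^2*q₀) * (q - q₀)^2 := by rw [← abs_mul, abs_mul_self]; ring
  -- E1 : |b - b₀| ≤ |s - s₀|
  have E1 : |b - b₀| ≤ |s - s₀| := by
    have hid : (b - b₀)*(b + b₀) = -((s-s₀)*(s+s₀)) := by linear_combination hb2 - hb₀2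
    have h : |b - b₀| * (b + b₀) = |s - s₀| * (s + s₀) := by
      have e' : |b - b₀| * (b + b₀) = |(b - b₀) * (b + b₀)| := by
        rw [abs_mul, abs_of_pos (show (0:ℝ) < b + b₀ by positivity)]
      rw [e', hid, abs_neg, abs_mul, abs_of_pos (show (0:ℝ) < s + s₀ by positivity)]
    have c1 : |b - b₀| * 2 ≤ |b - b₀| * (b + b₀) := mul_le_mul_of_nonneg_left (by linarith) (abs_nonneg _)
    have c2 : |s - s₀| * (s + s₀) ≤ |s - s₀| * 2 := mul_le_mul_of_nonneg_left (by linarith) (abs_nonneg _)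
    linarith [c1, c2, h]
  -- assembly
  have eX : (p/a + β^2*q/b) - (p/a₀ + β^2*q₀/b₀) - (q - q₀)*b₀
      = (p*(a-a₀) + q₀*(b-b₀) + (s-s₀)) + (q-q₀)*(b-b₀) := by
    rw [e1, e1₀]; ring
  rw [eX]
  have htri := abs_add_le (p*(a-a₀) + q₀*(b-b₀) + (s-s₀)) ((q-q₀)*(b-b₀))
  have hlast : |(q-q₀)*(b-b₀)| ≤ (q - q₀)^2 := by
    rw [abs_mul]
    calc |q - q₀| * |b - b₀| ≤ |q - q₀| * |q - q₀| := by
          apply mul_le_mul_of_nonneg_left (E1.trans hd) (abs_nonneg _)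
    _ = (q - q₀)^2 := by rw [← abs_mul, abs_mul_self]; ring
  calc |(p*(a-a₀) + q₀*(b-b₀) + (s-s₀)) + (q-q₀)*(b-b₀)|
      ≤ |p*(a-a₀) + q₀*(b-b₀) + (s-s₀)| + |(q-q₀)*(b-b₀)| := htri
  _ ≤ ((3*p + β^2*q₀)/s₀) * (q - q₀)^2 + (q - q₀)^2 := add_le_add hΔ hlast
  _ = (1 + (3*p + β^2*q₀)/s₀) * (q - q₀)^2 := by ring

set_option maxHeartbeats 600000 in
theorem stmt_5 (β : ℝ) (hβ : Real.sqrt (3 / 2) ≤ β) (σ l : ℝ → ℝ)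
    (hrange : ∀ t : ℝ, 0 ≤ t → σ t ∈ Set.Ioo (0 : ℝ) 1)
    (heq : ∀ t : ℝ, 0 ≤ t →
      pth t * σ t / Real.sqrt (1 - (σ t) ^ 2)
        + qth t * σ t / Real.sqrt (β ^ 2 - (σ t) ^ 2) = 1)
    (hl : ∀ t : ℝ, 0 ≤ t →
      l t = pth t / Real.sqrt (1 - (σ t) ^ 2)
        + β ^ 2 * qth t / Real.sqrt (β ^ 2 - (σ t) ^ 2) - t - Real.sqrt 2) :
    ∀ k : ℕ, (∀ t ∈ Set.Ioo (2 * (k : ℝ)) (2 * (k : ℝ) + 1),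
        HasDerivAt l (Real.sqrt (β ^ 2 - (σ t) ^ 2) - 1) t ∧
          0 < Real.sqrt (β ^ 2 - (σ t) ^ 2) - 1) ∧
      StrictMonoOn l (Set.Ioo (2 * (k : ℝ)) (2 * (k : ℝ) + 1)) := by
  have hβ2 : (3:ℝ)/2 ≤ β^2 := by
    nlinarith [Real.sq_sqrt (show (0:ℝ) ≤ 3/2 by norm_num), Real.sqrt_nonneg (3/2 : ℝ)]
  intro k
  -- basic facts at each point of the interval
  have hfacts : ∀ t ∈ Set.Ioo (2 * (k : ℝ)) (2 * (k : ℝ) + 1),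
      0 < t ∧ qth t = t - k ∧ pth t = (k : ℝ) + 1 := by
    intro t ht
    obtain ⟨ht1, ht2⟩ := ht
    have hk0 : (0:ℝ) ≤ (k:ℝ) := Nat.cast_nonneg k
    have ht0 : 0 < t := by linarith
    have hfl : ⌊t⌋ = 2*(k:ℤ) := by
      rw [Int.floor_eq_iff]
      constructor
      · push_cast; linarith
      · push_cast; linarith
    have hqt : qth t = t - k := by
      rw [qth, hfl, if_neg (by exact (Int.not_odd_iff_even.mpr (even_two_mul _)))]
      push_cast; ring
    exact ⟨ht0, hqt, by rw [pth, hqt]; ring⟩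
  -- per-point data
  have hdata : ∀ t ∈ Set.Ioo (2 * (k : ℝ)) (2 * (k : ℝ) + 1),
      0 < σ t ∧ σ t < 1 ∧ (Real.sqrt (1 - σ t ^ 2))^2 = 1 - σ t ^ 2 ∧
      0 < Real.sqrt (1 - σ t ^ 2) ∧ (Real.sqrt (β^2 - σ t ^ 2))^2 = β^2 - σ t ^ 2 ∧
      0 < Real.sqrt (β^2 - σ t ^ 2) ∧ 0 < t - (k:ℝ) ∧
      ((k:ℝ)+1) * σ t / Real.sqrt (1 - σ t ^ 2)
        + (t - (k:ℝ)) * σ t / Real.sqrt (β^2 - σ t ^ 2) = 1 := by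
    intro t ht
    obtain ⟨ht0, hqt, hpt⟩ := hfacts t ht
    obtain ⟨hσ0, hσ1⟩ := hrange t ht0.le
    have h1 : (0:ℝ) < 1 - σ t ^ 2 := by nlinarith
    have h2 : (0:ℝ) < β^2 - σ t ^ 2 := by nlinarith
    have hkt : 0 < t - (k:ℝ) := by
      have := ht.1
      have hk0 : (0:ℝ) ≤ (k:ℝ) := Nat.cast_nonneg k
      linarith
    have he := heq t ht0.le
    rw [hqt, hpt] at he
    exact ⟨hσ0, hσ1, Real.sq_sqrt h1.le, Real.sqrt_pos.mpr h1,
      Real.sq_sqrt h2.le, Real.sqrt_pos.mpr h2, hkt, he⟩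
  have hderiv : ∀ t ∈ Set.Ioo (2 * (k : ℝ)) (2 * (k : ℝ) + 1),
      HasDerivAt l (Real.sqrt (β ^ 2 - (σ t) ^ 2) - 1) t ∧
        0 < Real.sqrt (β ^ 2 - (σ t) ^ 2) - 1 := by
    intro t₀ ht₀
    obtain ⟨hσ0, hσ1, ha₀2, ha₀0, hb₀2, hb₀0, hq₀, he₀⟩ := hdata t₀ ht₀
    have hp1 : (1:ℝ) ≤ (k:ℝ)+1 := by
      have : (0:ℝ) ≤ (k:ℝ) := Nat.cast_nonneg k
      linarith
    obtain ⟨hs₀2, _, _, hb₀ge⟩ := aux_bounds β ((k:ℝ)+1) (t₀-(k:ℝ)) (σ t₀)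
      (Real.sqrt (1 - σ t₀ ^ 2)) (Real.sqrt (β^2 - σ t₀ ^ 2)) hβ2 hp1 hq₀ hσ0 hσ1 ha₀2 ha₀0 hb₀2 hb₀0 he₀
    have hbgt : 1 < Real.sqrt (β^2 - σ t₀ ^ 2) := by nlinarith
    refine ⟨?_, by linarith⟩
    rw [hasDerivAt_iff_isLittleO, Asymptotics.isLittleO_iff]
    intro ε hε
    set C : ℝ := 1 + (3*((k:ℝ)+1) + β^2*(t₀-(k:ℝ)))/(σ t₀) with hC
    have hC0 : 0 < C := by
      have hk0 : (0:ℝ) ≤ (k:ℝ) := Nat.cast_nonneg k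
      have h1 : 0 ≤ 3*((k:ℝ)+1) := by linarith
      have h2 : 0 ≤ β^2*(t₀-(k:ℝ)) := mul_nonneg (sq_nonneg β) hq₀.le
      have := div_nonneg (by linarith : (0:ℝ) ≤ 3*((k:ℝ)+1) + β^2*(t₀-(k:ℝ))) hσ0.le
      rw [hC]
      linarith
    have hmem : Set.Ioo (2 * (k : ℝ)) (2 * (k : ℝ) + 1) ∈ nhds t₀ :=
      Ioo_mem_nhds ht₀.1 ht₀.2
    filter_upwards [hmem, Metric.ball_mem_nhds t₀ (div_pos hε hC0)] with x hx hxb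
    obtain ⟨hσx0, hσx1, hax2, hax0, hbx2, hbx0, hqx, hex⟩ := hdata x hx
    have hkey := key_est β ((k:ℝ)+1) (x-(k:ℝ)) (t₀-(k:ℝ)) (σ x) (σ t₀)
      (Real.sqrt (1 - σ x ^ 2)) (Real.sqrt (β^2 - σ x ^ 2))
      (Real.sqrt (1 - σ t₀ ^ 2)) (Real.sqrt (β^2 - σ t₀ ^ 2))
      hβ2 hp1 hqx hq₀ hσx0 hσx1 hax2 hax0 hbx2 hbx0 hσ0 hσ1 ha₀2 ha₀0 hb₀2 hb₀0 hex he₀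
    have hxt : (x-(k:ℝ)) - (t₀-(k:ℝ)) = x - t₀ := by ring
    rw [hxt] at hkey
    -- rewrite l
    have hlx := hl x (hfacts x hx).1.le
    have hlt₀ := hl t₀ (hfacts t₀ ht₀).1.le
    obtain ⟨_, hqtx, hptx⟩ := hfacts x hx
    obtain ⟨_, hqtt, hptt⟩ := hfacts t₀ ht₀
    rw [hqtx, hptx] at hlx
    rw [hqtt, hptt] at hlt₀
    have hrw : l x - l t₀ - (x - t₀) • (Real.sqrt (β^2 - σ t₀ ^ 2) - 1)
        = (((k:ℝ)+1)/Real.sqrt (1 - σ x ^ 2) + β^2*(x-(k:ℝ))/Real.sqrt (β^2 - σ x ^ 2))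
          - (((k:ℝ)+1)/Real.sqrt (1 - σ t₀ ^ 2) + β^2*(t₀-(k:ℝ))/Real.sqrt (β^2 - σ t₀ ^ 2))
          - (x - t₀) * Real.sqrt (β^2 - σ t₀ ^ 2) := by
      rw [smul_eq_mul, hlx, hlt₀]; ring
    rw [Real.norm_eq_abs, Real.norm_eq_abs, hrw]
    have hball : |x - t₀| < ε/C := by
      rw [Metric.mem_ball, Real.dist_eq] at hxb
      exact hxb
    calc |_ - _ - (x-t₀)*Real.sqrt (β^2 - σ t₀ ^ 2)| ≤ C * (x - t₀)^2 := hkey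
    _ = C * (|x - t₀| * |x - t₀|) := by rw [← abs_mul, abs_mul_self, ← sq]
    _ ≤ C * ((ε/C) * |x - t₀|) :=
        mul_le_mul_of_nonneg_left (mul_le_mul_of_nonneg_right hball.le (abs_nonneg _)) hC0.le
    _ = ε * |x - t₀| := by field_simp
  refine ⟨hderiv, ?_⟩
  apply strictMonoOn_of_deriv_pos (convex_Ioo _ _)
  · intro t ht
    exact (hderiv t ht).1.continuousAt.continuousWithinAt
  · intro t ht
    rw [interior_Ioo] at ht
    rw [(hderiv t ht).1.deriv]
    exact (hderiv t ht).2
end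

section
/- Let β > 1, k₀ ∈ ℕ with k₀ ≥ 1, and let ψ : [t₀, 2k₀+1] → ℝ satisfy ψ(t₀) = 1 and the differential inequality ψ'(t) < ψ(t)/(t+1) - ψ(t)³/(β²(t+1)) with 0 < ψ ≤ β. Then for all t ∈ [t₀, 2k₀+1], ψ(t) ≤ 1/√(1/β² + (1 - 1/β²)·(t₀+1)²/(t+1)²). -/
open Real Set

/-!
The quantity `(t + 1)² (ψ⁻² - 1/β²)` is constant along solutions of the Bernoulli equation
`ψ' = ψ/(t + 1) - ψ³/(β² (t + 1))` (the substitution `u = ψ⁻²` makes it linear), and the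
differential inequality makes it nondecreasing. Comparing its values at `t₀`, where `ψ = 1`,
and at `t` and solving for `ψ t` gives the bound.
-/

noncomputable def bernoulliInvariant (c : ℝ) (ψ : ℝ → ℝ) (s : ℝ) : ℝ :=
  (s + 1) ^ 2 * ((ψ s ^ 2)⁻¹ - c)

theorem hasDerivAt_bernoulliInvariant {c : ℝ} {ψ : ℝ → ℝ} {ψ' s : ℝ}
    (hψ : HasDerivAt ψ ψ' s) (hψs : ψ s ≠ 0) :
    HasDerivAt (bernoulliInvariant c ψ)
      (2 * (s + 1) / ψ s ^ 3 * (ψ s - c * ψ s ^ 3 - (s + 1) * ψ')) s := by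
  refine ((((hasDerivAt_id' s).add_const 1).fun_pow 2).mul
    (((hψ.fun_pow 2).fun_inv (pow_ne_zero 2 hψs)).sub_const c)).congr_deriv ?_
  field_simp
  ring

theorem monotoneOn_bernoulliInvariant {c a b : ℝ} {ψ ψ' : ℝ → ℝ} (ha : -1 < a)
    (hpos : ∀ s ∈ Icc a b, 0 < ψ s) (hderiv : ∀ s ∈ Icc a b, HasDerivAt ψ (ψ' s) s)
    (hineq : ∀ s ∈ Icc a b, ψ' s ≤ (ψ s - c * ψ s ^ 3) / (s + 1)) :
    MonotoneOn (bernoulliInvariant c ψ) (Icc a b) := by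
  have hw : ∀ s ∈ Icc a b, HasDerivAt (bernoulliInvariant c ψ)
      (2 * (s + 1) / ψ s ^ 3 * (ψ s - c * ψ s ^ 3 - (s + 1) * ψ' s)) s :=
    fun s hs => hasDerivAt_bernoulliInvariant (hderiv s hs) (hpos s hs).ne'
  refine monotoneOn_of_deriv_nonneg (convex_Icc a b)
    (fun s hs => (hw s hs).continuousAt.continuousWithinAt) ?_ ?_
  · intro s hs
    exact (hw s (interior_subset hs)).differentiableAt.differentiableWithinAt
  · intro s hs
    have hs' := interior_subset hs
    have hs1 : 0 < s + 1 := by linarith [hs'.1]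
    have hψs := hpos s hs'
    rw [(hw s hs').deriv]
    have : 0 ≤ ψ s - c * ψ s ^ 3 - (s + 1) * ψ' s := by
      have := (le_div_iff₀ hs1).1 (hineq s hs')
      linarith
    positivity

theorem le_one_div_sqrt_of_sq_mul_le_sq_mul {c x r ρ : ℝ} (hc : 0 ≤ c) (hx : 0 < x)
    (hr : 0 < r) (hrρ : r ≤ ρ) (h : r ^ 2 * (1 - c) ≤ ρ ^ 2 * ((x ^ 2)⁻¹ - c)) :
    x ≤ 1 / √(c + (1 - c) * r ^ 2 / ρ ^ 2) := by
  have hρ : 0 < ρ := hr.trans_le hrρ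
  have hq : r ^ 2 / ρ ^ 2 ≤ 1 := div_le_one_of_le₀ (by gcongr) (by positivity)
  have hD : 0 < c + (1 - c) * r ^ 2 / ρ ^ 2 := by
    have : 0 < r ^ 2 / ρ ^ 2 := by positivity
    rw [mul_div_assoc]
    nlinarith
  have hDx : c + (1 - c) * r ^ 2 / ρ ^ 2 ≤ (1 / x) ^ 2 := by
    have : (1 - c) * r ^ 2 / ρ ^ 2 ≤ (x ^ 2)⁻¹ - c := by
      rw [div_le_iff₀ (by positivity)]
      linarith
    rw [one_div_pow, one_div]
    linarith
  rw [le_one_div hx (sqrt_pos.2 hD)]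
  exact (sqrt_le_left (by positivity)).2 hDx

theorem stmt_8_general (β : ℝ) (k₀ : ℕ)
    (t₀ : ℝ) (ht₀ : 0 < t₀)
    (ψ ψ' : ℝ → ℝ)
    (hinit : ψ t₀ = 1)
    (hpos : ∀ t ∈ Set.Icc t₀ (2 * (k₀ : ℝ) + 1), 0 < ψ t ∧ ψ t ≤ β)
    (hderiv : ∀ t ∈ Set.Icc t₀ (2 * (k₀ : ℝ) + 1), HasDerivAt ψ (ψ' t) t)
    (hineq : ∀ t ∈ Set.Icc t₀ (2 * (k₀ : ℝ) + 1),
      ψ' t < ψ t / (t + 1) - (ψ t) ^ 3 / (β ^ 2 * (t + 1))) :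
    ∀ t ∈ Set.Icc t₀ (2 * (k₀ : ℝ) + 1),
      ψ t ≤ 1 / Real.sqrt (1 / β ^ 2
        + (1 - 1 / β ^ 2) * (t₀ + 1) ^ 2 / (t + 1) ^ 2) := by
  intro t ht
  have hmono := monotoneOn_bernoulliInvariant (c := 1 / β ^ 2) (by linarith)
    (fun s hs => (hpos s hs).1) hderiv fun s hs =>
      calc ψ' s ≤ ψ s / (s + 1) - ψ s ^ 3 / (β ^ 2 * (s + 1)) := (hineq s hs).le
        _ = _ := by rw [div_mul_eq_div_div_swap]; ring
  have hw := hmono (left_mem_Icc.2 (ht.1.trans ht.2)) ht ht.1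
  simp only [bernoulliInvariant, hinit] at hw
  exact le_one_div_sqrt_of_sq_mul_le_sq_mul (by positivity) (hpos t ht).1
    (by linarith) (by linarith [ht.1]) (by simpa using hw)

theorem stmt_8 (β : ℝ) (hβ : 1 < β) (k₀ : ℕ) (hk₀ : 1 ≤ k₀)
    (t₀ : ℝ) (ht₀ : 0 < t₀) (ht₀' : t₀ ≤ 2 * (k₀ : ℝ) + 1)
    (ψ ψ' : ℝ → ℝ)
    (hinit : ψ t₀ = 1)
    (hpos : ∀ t ∈ Set.Icc t₀ (2 * (k₀ : ℝ) + 1), 0 < ψ t ∧ ψ t ≤ β)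
    (hderiv : ∀ t ∈ Set.Icc t₀ (2 * (k₀ : ℝ) + 1), HasDerivAt ψ (ψ' t) t)
    (hineq : ∀ t ∈ Set.Icc t₀ (2 * (k₀ : ℝ) + 1),
      ψ' t < ψ t / (t + 1) - (ψ t) ^ 3 / (β ^ 2 * (t + 1))) :
    ∀ t ∈ Set.Icc t₀ (2 * (k₀ : ℝ) + 1),
      ψ t ≤ 1 / Real.sqrt (1 / β ^ 2
        + (1 - 1 / β ^ 2) * (t₀ + 1) ^ 2 / (t + 1) ^ 2) :=
  stmt_8_general β k₀ t₀ ht₀ ψ ψ' hinit hpos hderiv hineq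
end

section
/- Define g(b) = 1 + 3b² - 4b√(c₀(b)) + (1 - e⁻¹)·(√(c₀(b)) - 1)/√(c₀(b)), where c₀(b) = 1 + (9/16)(b² - 1). Then g(1) = 0 and g(b) > 0 for all b ∈ (1, √(3/2)]. -/
open Real

noncomputable def c₀ (b : ℝ) : ℝ := 1 + 9 / 16 * (b ^ 2 - 1)

noncomputable def g (b : ℝ) : ℝ :=
  1 + 3 * b ^ 2 - 4 * b * Real.sqrt (c₀ b)
    + (1 - Real.exp (-1)) * (Real.sqrt (c₀ b) - 1) / Real.sqrt (c₀ b)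

theorem stmt_9 : g 1 = 0 ∧ ∀ b ∈ Set.Ioc (1 : ℝ) (Real.sqrt (3 / 2)), 0 < g b := by
  constructor
  · have h1 : c₀ 1 = 1 := by norm_num [c₀]
    simp [g, h1]
    norm_num
  · rintro b ⟨hb1, hb2⟩
    have hb0 : (0:ℝ) < b := by linarith
    have hsq : Real.sqrt (3/2) ^ 2 = 3/2 := Real.sq_sqrt (by norm_num)
    have hb2' : b ^ 2 ≤ 3 / 2 := by nlinarith [Real.sqrt_nonneg (3/2 : ℝ)]
    have hc0 : c₀ b = (7 + 9 * b ^ 2) / 16 := by rw [c₀]; ring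
    have hcpos : 0 < c₀ b := by rw [hc0]; nlinarith
    set s := Real.sqrt (c₀ b) with hs
    have hspos : 0 < s := Real.sqrt_pos.mpr hcpos
    have hs2 : s ^ 2 = (7 + 9 * b ^ 2) / 16 := by
      rw [hs, Real.sq_sqrt hcpos.le, hc0]
    set k := 1 - Real.exp (-1) with hk
    have he1 : Real.exp 1 < 2.7182818286 := Real.exp_one_lt_d9
    have he2 : 2.7182818283 < Real.exp 1 := Real.exp_one_gt_d9
    have hinv : Real.exp (-1) * Real.exp 1 = 1 := by
      rw [Real.exp_neg]; field_simp
    have hepos : (0:ℝ) < Real.exp (-1) := Real.exp_pos _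
    have hem1 : Real.exp (-1) < 0.368 := by
      nlinarith [mul_pos hepos (show (0:ℝ) < Real.exp 1 - 2.7182818283 by linarith)]
    have hem2 : 0.367 < Real.exp (-1) := by
      nlinarith [mul_pos hepos (show (0:ℝ) < 2.7182818286 - Real.exp 1 by linarith)]
    have hk1 : 0.632 < k := by rw [hk]; linarith
    have hk2 : k < 0.633 := by rw [hk]; linarith
    clear_value s k
    have hQ : 0 < (54*k - 9) * b^3 - (18*k + 9) * b^2 + (9*k^2 + 42*k - 7) * b
        + (9*k^2 - 14*k - 7) := by
      nlinarith [mul_pos (sub_pos.mpr hb1) hb0, mul_pos (mul_pos (sub_pos.mpr hb1) hb0) hb0,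
        sq_nonneg (b - 1), sq_nonneg k, mul_pos hb0 hb0]
    have hP : 0 < (b - 1) * ((54*k - 9) * b^3 - (18*k + 9) * b^2 + (9*k^2 + 42*k - 7) * b
        + (9*k^2 - 14*k - 7)) := mul_pos (by linarith) hQ
    have key : (4 * b * s ^ 2 + k) ^ 2 < (s * (1 + 3 * b ^ 2 + k)) ^ 2 := by
      have hA : (s * (1 + 3 * b ^ 2 + k)) ^ 2 = s ^ 2 * (1 + 3 * b ^ 2 + k) ^ 2 := by ring
      have hiden : (7 + 9 * b ^ 2) / 16 * (1 + 3 * b ^ 2 + k) ^ 2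
          - (4 * b * ((7 + 9 * b ^ 2) / 16) + k) ^ 2
          = (b - 1) * ((54*k - 9) * b^3 - (18*k + 9) * b^2 + (9*k^2 + 42*k - 7) * b
            + (9*k^2 - 14*k - 7)) / 16 := by ring
      rw [hA, hs2]
      linarith [hP, hiden]
    have hBpos : (0:ℝ) ≤ 4 * b * s ^ 2 + k := by
      have : 0 < 4 * b * s ^ 2 := by positivity
      linarith
    have hG : 4 * b * s ^ 2 + k < s * (1 + 3 * b ^ 2 + k) :=
      lt_of_pow_lt_pow_left₀ 2 (by positivity) key
    have hgeq : g b = (s * (1 + 3 * b ^ 2) - 4 * b * s ^ 2 + k * (s - 1)) / s := by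
      rw [g, ← hs, ← hk]
      field_simp
    rw [hgeq]
    apply div_pos _ hspos
    nlinarith [hG]
end

section
/- For β > 1 and integer k ≥ 0, let σ = σ(k,β) ∈ (0,1) and τ = τ(k,β) ∈ (0,1) be implicitly defined by (k+1)σ/√(1-σ²) + kσ/√(β²-σ²) = 1 and (k+2)τ/√(1-τ²) + (k+1)τ/√(β²-τ²) = 1 respectively, and define δ(k,β) = (k+2)/√(1-τ²) + (k+1)β²/√(β²-τ²) - (k+1)/√(1-σ²) - kβ²/√(β²-σ²) - 2. Then for fixed β > 1, the sequence k ↦ δ(k,β) is strictly increasing. -/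
open Real

-- tangent-line inequalities for x ↦ sqrt (c - x^2) at s
private lemma tangent_le (c s u : ℝ) (hs : 0 < s) (hu : 0 < u)
    (hsc : s^2 < c) (huc : u^2 < c) :
    Real.sqrt (c - u^2) ≤ Real.sqrt (c - s^2) + s*(s-u)/Real.sqrt (c - s^2) := by
  have hA : (0:ℝ) < Real.sqrt (c - s^2) := Real.sqrt_pos.2 (by linarith)
  have hA2 : Real.sqrt (c - s^2)^2 = c - s^2 := Real.sq_sqrt (by linarith)
  have hsu : s * u < c := by nlinarith
  have h1 : Real.sqrt (c - s^2) + s*(s-u)/Real.sqrt (c - s^2)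
      = (c - s*u)/Real.sqrt (c-s^2) := by
    field_simp
    nlinarith [hA2]
  rw [h1, le_div_iff₀ hA]
  have h2 : Real.sqrt (c - u^2) * Real.sqrt (c - s^2) = Real.sqrt ((c-u^2)*(c-s^2)) :=
    (Real.sqrt_mul (by linarith) _).symm
  rw [h2]
  have h3 : (c-u^2)*(c-s^2) ≤ (c - s*u)^2 := by nlinarith [sq_nonneg (s-u), sq_nonneg s]
  calc Real.sqrt ((c-u^2)*(c-s^2)) ≤ Real.sqrt ((c-s*u)^2) := Real.sqrt_le_sqrt h3
    _ = c - s*u := Real.sqrt_sq (by linarith)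

private lemma tangent_lt (c s u : ℝ) (hs : 0 < s) (hu : 0 < u)
    (hsc : s^2 < c) (huc : u^2 < c) (hne : u ≠ s) :
    Real.sqrt (c - u^2) < Real.sqrt (c - s^2) + s*(s-u)/Real.sqrt (c - s^2) := by
  have hA : (0:ℝ) < Real.sqrt (c - s^2) := Real.sqrt_pos.2 (by linarith)
  have hA2 : Real.sqrt (c - s^2)^2 = c - s^2 := Real.sq_sqrt (by linarith)
  have hsu : s * u < c := by nlinarith
  have h1 : Real.sqrt (c - s^2) + s*(s-u)/Real.sqrt (c - s^2)
      = (c - s*u)/Real.sqrt (c-s^2) := by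
    field_simp
    nlinarith [hA2]
  rw [h1, lt_div_iff₀ hA]
  have h2 : Real.sqrt (c - u^2) * Real.sqrt (c - s^2) = Real.sqrt ((c-u^2)*(c-s^2)) :=
    (Real.sqrt_mul (by linarith) _).symm
  rw [h2]
  have hc : 0 < c := by nlinarith
  have hsq : 0 < (s-u)^2 := by
    have : s - u ≠ 0 := sub_ne_zero.2 (Ne.symm hne)
    positivity
  have h3 : (c-u^2)*(c-s^2) < (c - s*u)^2 := by nlinarith
  calc Real.sqrt ((c-u^2)*(c-s^2)) < Real.sqrt ((c-s*u)^2) :=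
        Real.sqrt_lt_sqrt (by nlinarith) h3
    _ = c - s*u := Real.sqrt_sq (by linarith)

private lemma phi_lt (β a b s u : ℝ) (hβ : 1 < β) (ha : 0 < a) (hb : 0 ≤ b)
    (hs0 : 0 < s) (hs1 : s < 1) (hu0 : 0 < u) (hu1 : u < 1)
    (hC : a*s/Real.sqrt (1-s^2) + b*s/Real.sqrt (β^2-s^2) = 1) (hne : u ≠ s)
    (tangent_le : ∀ c s u : ℝ, 0 < s → 0 < u → s^2 < c → u^2 < c →
      Real.sqrt (c - u^2) ≤ Real.sqrt (c - s^2) + s*(s-u)/Real.sqrt (c - s^2))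
    (tangent_lt : ∀ c s u : ℝ, 0 < s → 0 < u → s^2 < c → u^2 < c → u ≠ s →
      Real.sqrt (c - u^2) < Real.sqrt (c - s^2) + s*(s-u)/Real.sqrt (c - s^2)) :
    a * Real.sqrt (1-u^2) + b * Real.sqrt (β^2-u^2) + u
      < a * Real.sqrt (1-s^2) + b * Real.sqrt (β^2-s^2) + s := by
  have hs2 : s^2 < 1 := by nlinarith
  have hu2 : u^2 < 1 := by nlinarith
  have hβ2 : (1:ℝ) < β^2 := by nlinarith
  have h1 := tangent_lt 1 s u hs0 hu0 (by linarith) (by linarith) hne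
  have h2 := tangent_le (β^2) s u hs0 hu0 (by nlinarith) (by nlinarith)
  have h1' := mul_lt_mul_of_pos_left h1 ha
  have h2' := mul_le_mul_of_nonneg_left h2 hb
  rw [mul_add] at h1' h2'
  have key : a*(s*(s-u)/Real.sqrt (1-s^2)) + b*(s*(s-u)/Real.sqrt (β^2-s^2)) = s - u := by
    have e : a*(s*(s-u)/Real.sqrt (1-s^2)) + b*(s*(s-u)/Real.sqrt (β^2-s^2))
        = (s-u) * (a*s/Real.sqrt (1-s^2) + b*s/Real.sqrt (β^2-s^2)) := by ring
    rw [e, hC]; ring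
  linarith

private lemma ratio_lt (c x y : ℝ) (hx : 0 < x) (hxy : x < y) (hyc : y^2 < c) :
    x / Real.sqrt (c - x^2) < y / Real.sqrt (c - y^2) := by
  have hy : 0 < y := lt_trans hx hxy
  have hxc : x^2 < c := by nlinarith
  have hBy : 0 < Real.sqrt (c - y^2) := Real.sqrt_pos.2 (by linarith)
  have hBx : 0 < Real.sqrt (c - x^2) := Real.sqrt_pos.2 (by linarith)
  rw [div_lt_div_iff₀ hBx hBy]
  have h : Real.sqrt (c - y^2) ≤ Real.sqrt (c - x^2) := Real.sqrt_le_sqrt (by nlinarith)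
  calc x * Real.sqrt (c - y^2) ≤ x * Real.sqrt (c - x^2) := by nlinarith
    _ < y * Real.sqrt (c - x^2) := by nlinarith

private lemma uniq (β a b x y : ℝ) (hβ : 1 < β) (ha : 0 < a) (hb : 0 ≤ b)
    (hx0 : 0 < x) (hx1 : x < 1) (hy0 : 0 < y) (hy1 : y < 1)
    (hxeq : a*x/Real.sqrt (1-x^2) + b*x/Real.sqrt (β^2-x^2) = 1)
    (hyeq : a*y/Real.sqrt (1-y^2) + b*y/Real.sqrt (β^2-y^2) = 1) : x = y := by
  have hβ2 : (1:ℝ) < β^2 := by nlinarith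
  have main : ∀ p q : ℝ, 0 < p → p < q → q < 1 →
      a*p/Real.sqrt (1-p^2) + b*p/Real.sqrt (β^2-p^2)
        < a*q/Real.sqrt (1-q^2) + b*q/Real.sqrt (β^2-q^2) := by
    intro p q hp hpq hq1
    have h1 := ratio_lt 1 p q hp hpq (by nlinarith)
    have h2 := ratio_lt (β^2) p q hp hpq (by nlinarith)
    have h1' := mul_lt_mul_of_pos_left h1 ha
    have h2' := mul_le_mul_of_nonneg_left h2.le hb
    rw [mul_div_assoc, mul_div_assoc, mul_div_assoc, mul_div_assoc]
    linarith
  rcases lt_trichotomy x y with h | h | h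
  · have := main x y hx0 h hy1; rw [hxeq, hyeq] at this; linarith
  · exact h
  · have := main y x hy0 h hx1; rw [hxeq, hyeq] at this; linarith

private lemma eval (β a b s : ℝ) (hβ : 1 < β) (hs0 : 0 < s) (hs1 : s < 1)
    (hC : a*s/Real.sqrt (1-s^2) + b*s/Real.sqrt (β^2-s^2) = 1) :
    a / Real.sqrt (1-s^2) + b*β^2/Real.sqrt (β^2-s^2)
      = a*Real.sqrt (1-s^2) + b*Real.sqrt (β^2-s^2) + s := by
  have hβ2 : (1:ℝ) < β^2 := by nlinarith
  have hA : 0 < Real.sqrt (1-s^2) := Real.sqrt_pos.2 (by nlinarith)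
  have hB : 0 < Real.sqrt (β^2-s^2) := Real.sqrt_pos.2 (by nlinarith)
  have hA2 : Real.sqrt (1-s^2)^2 = 1-s^2 := Real.sq_sqrt (by nlinarith)
  have hB2 : Real.sqrt (β^2-s^2)^2 = β^2-s^2 := Real.sq_sqrt (by nlinarith)
  field_simp at hC ⊢
  linear_combination s*hC - a*Real.sqrt (β^2-s^2)*hA2 - b*Real.sqrt (1-s^2)*hB2

private noncomputable def gaux (β : ℝ) (σ : ℕ → ℝ) (k : ℕ) : ℝ :=
  ((k:ℝ)+1) * Real.sqrt (1 - σ k ^ 2) + (k:ℝ) * Real.sqrt (β^2 - σ k ^ 2) + σ k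

theorem stmt_10 (β : ℝ) (hβ : 1 < β) (σ τ : ℕ → ℝ)
    (hσrange : ∀ k : ℕ, σ k ∈ Set.Ioo (0 : ℝ) 1)
    (hτrange : ∀ k : ℕ, τ k ∈ Set.Ioo (0 : ℝ) 1)
    (hσeq : ∀ k : ℕ, ((k : ℝ) + 1) * σ k / Real.sqrt (1 - (σ k) ^ 2)
        + (k : ℝ) * σ k / Real.sqrt (β ^ 2 - (σ k) ^ 2) = 1)
    (hτeq : ∀ k : ℕ, ((k : ℝ) + 2) * τ k / Real.sqrt (1 - (τ k) ^ 2)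
        + ((k : ℝ) + 1) * τ k / Real.sqrt (β ^ 2 - (τ k) ^ 2) = 1)
    (δ : ℕ → ℝ)
    (hδ : ∀ k : ℕ, δ k = ((k : ℝ) + 2) / Real.sqrt (1 - (τ k) ^ 2)
        + ((k : ℝ) + 1) * β ^ 2 / Real.sqrt (β ^ 2 - (τ k) ^ 2)
        - ((k : ℝ) + 1) / Real.sqrt (1 - (σ k) ^ 2)
        - (k : ℝ) * β ^ 2 / Real.sqrt (β ^ 2 - (σ k) ^ 2) - 2) :
    StrictMono δ := by
  -- σ's equation for k+1, with real casts simplified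
  have hσeq' : ∀ k : ℕ, ((k:ℝ)+2) * σ (k+1) / Real.sqrt (1 - σ (k+1) ^ 2)
      + ((k:ℝ)+1) * σ (k+1) / Real.sqrt (β^2 - σ (k+1) ^ 2) = 1 := by
    intro k
    have h := hσeq (k+1)
    push_cast at h
    linear_combination h
  -- τ k = σ (k+1)
  have hτσ : ∀ k : ℕ, τ k = σ (k+1) := by
    intro k
    exact uniq β ((k:ℝ)+2) ((k:ℝ)+1) (τ k) (σ (k+1)) hβ (by positivity) (by positivity)
      (hτrange k).1 (hτrange k).2 (hσrange (k+1)).1 (hσrange (k+1)).2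
      (hτeq k) (hσeq' k)
  -- δ in terms of gaux
  have hδg : ∀ k : ℕ, δ k = gaux β σ (k+1) - gaux β σ k - 2 := by
    intro k
    have e1 : ((k:ℝ)+2) / Real.sqrt (1 - σ (k+1) ^ 2)
        + ((k:ℝ)+1)*β^2 / Real.sqrt (β^2 - σ (k+1) ^ 2)
        = ((k:ℝ)+2)*Real.sqrt (1 - σ (k+1) ^ 2) + ((k:ℝ)+1)*Real.sqrt (β^2 - σ (k+1) ^ 2)
          + σ (k+1) :=
      eval β ((k:ℝ)+2) ((k:ℝ)+1) (σ (k+1)) hβ (hσrange (k+1)).1 (hσrange (k+1)).2 (hσeq' k)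
    have e2 : ((k:ℝ)+1) / Real.sqrt (1 - σ k ^ 2)
        + (k:ℝ)*β^2 / Real.sqrt (β^2 - σ k ^ 2)
        = ((k:ℝ)+1)*Real.sqrt (1 - σ k ^ 2) + (k:ℝ)*Real.sqrt (β^2 - σ k ^ 2) + σ k :=
      eval β ((k:ℝ)+1) ((k:ℝ)) (σ k) hβ (hσrange k).1 (hσrange k).2 (hσeq k)
    rw [hδ k, hτσ k, gaux, gaux]
    push_cast
    linarith [e1, e2]
  -- consecutive σ's are distinct
  have hne : ∀ k : ℕ, σ (k+1) ≠ σ k := by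
    intro k heq
    have h1 := hσeq k
    have h2 := hσeq' k
    rw [heq] at h2
    have hA : 0 < Real.sqrt (1 - σ k ^ 2) :=
      Real.sqrt_pos.2 (by nlinarith [(hσrange k).1, (hσrange k).2])
    have hB : 0 < Real.sqrt (β^2 - σ k ^ 2) :=
      Real.sqrt_pos.2 (by nlinarith [(hσrange k).1, (hσrange k).2])
    have hz : σ k / Real.sqrt (1 - σ k ^ 2) + σ k / Real.sqrt (β^2 - σ k ^ 2) = 0 := by
      linear_combination h2 - h1
    have p1 : 0 < σ k / Real.sqrt (1 - σ k ^ 2) := div_pos (hσrange k).1 hA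
    have p2 : 0 < σ k / Real.sqrt (β^2 - σ k ^ 2) := div_pos (hσrange k).1 hB
    linarith
  -- main convexity inequality
  apply strictMono_nat_of_lt_succ
  intro k
  have h1 : ((k:ℝ)+1) * Real.sqrt (1 - σ (k+1) ^ 2) + (k:ℝ) * Real.sqrt (β^2 - σ (k+1) ^ 2)
      + σ (k+1) < gaux β σ k :=
    phi_lt β ((k:ℝ)+1) ((k:ℝ)) (σ k) (σ (k+1)) hβ (by positivity) (by positivity)
      (hσrange k).1 (hσrange k).2 (hσrange (k+1)).1 (hσrange (k+1)).2
      (hσeq k) (hne k) tangent_le tangent_lt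
  have hσeq'' : ((k:ℝ)+3) * σ (k+2) / Real.sqrt (1 - σ (k+2) ^ 2)
      + ((k:ℝ)+2) * σ (k+2) / Real.sqrt (β^2 - σ (k+2) ^ 2) = 1 := by
    have h := hσeq (k+2)
    push_cast at h
    linear_combination h
  have hne2 : σ (k+1) ≠ σ (k+2) := fun h => hne (k+1) (by rw [h])
  have h2 : ((k:ℝ)+3) * Real.sqrt (1 - σ (k+1) ^ 2) + ((k:ℝ)+2) * Real.sqrt (β^2 - σ (k+1) ^ 2)
      + σ (k+1) < gaux β σ (k+2) := by
    have := phi_lt β ((k:ℝ)+3) ((k:ℝ)+2) (σ (k+2)) (σ (k+1)) hβ (by positivity) (by positivity)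
      (hσrange (k+2)).1 (hσrange (k+2)).2 (hσrange (k+1)).1 (hσrange (k+1)).2
      hσeq'' hne2
    have hg : gaux β σ (k+2) = ((k:ℝ)+3)*Real.sqrt (1 - σ (k+2) ^ 2)
        + ((k:ℝ)+2)*Real.sqrt (β^2 - σ (k+2) ^ 2) + σ (k+2) := by
      rw [gaux]; push_cast; ring
    rw [hg]
    exact this tangent_le tangent_lt
  have hmid : 2 * gaux β σ (k+1) < gaux β σ k + gaux β σ (k+2) := by
    have hg1 : 2 * gaux β σ (k+1)
        = (((k:ℝ)+1) * Real.sqrt (1 - σ (k+1) ^ 2) + (k:ℝ) * Real.sqrt (β^2 - σ (k+1) ^ 2)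
            + σ (k+1))
        + (((k:ℝ)+3) * Real.sqrt (1 - σ (k+1) ^ 2) + ((k:ℝ)+2) * Real.sqrt (β^2 - σ (k+1) ^ 2)
            + σ (k+1)) := by
      rw [gaux]; push_cast; ring
    linarith [h1, h2, hg1.le, hg1.ge]
  rw [hδg k, hδg (k+1)]
  linarith
end

section
/- With δ(k,β) as above, for fixed β > 1, δ(k,β) = (β-1) - (β/(2(β+1)))·k⁻² + O(k⁻³) as k → +∞. In particular δ(k,β) → β - 1 as k → +∞. -/
open Real Filter Asymptotics

namespace Stmt11Aux
open Real

-- sqrt upper/lower bounds in q form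
lemma sqrtq_upper (q c : ℝ) (hq : 0 < q) (hc0 : 0 ≤ c) (hcq : c ≤ q) :
    Real.sqrt (q^2 - c^2) ≤ q - c^2/(2*q) := by
  have h1 : Real.sqrt (q^2 - c^2) ≤ Real.sqrt ((q - c^2/(2*q))^2) := by
    apply Real.sqrt_le_sqrt
    have : (q - c^2/(2*q))^2 = q^2 - c^2 + (c^2/(2*q))^2 := by field_simp; ring
    nlinarith [sq_nonneg (c^2/(2*q))]
  have h2 : 0 ≤ q - c^2/(2*q) := by
    rw [sub_nonneg, div_le_iff₀ (by positivity)]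
    nlinarith
  rwa [Real.sqrt_sq h2] at h1

lemma sqrtq_lower (q c : ℝ) (hq : 0 < q) (hc0 : 0 ≤ c) (hcq : c ≤ q) :
    q - c^2/(2*q) - c^4/(2*q^3) ≤ Real.sqrt (q^2 - c^2) := by
  rcases le_or_gt (q - c^2/(2*q) - c^4/(2*q^3)) 0 with h | h
  · exact h.trans (Real.sqrt_nonneg _)
  · rw [show q - c^2/(2*q) - c^4/(2*q^3) = Real.sqrt ((q - c^2/(2*q) - c^4/(2*q^3))^2) from
      (Real.sqrt_sq h.le).symm]
    apply Real.sqrt_le_sqrt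
    have key : (q - c^2/(2*q) - c^4/(2*q^3))^2 ≤ q^2 - c^2 := by
      have hq2 : (0:ℝ) < q^2 := by positivity
      have hq3 : (0:ℝ) < q^3 := by positivity
      have e : (q - c^2/(2*q) - c^4/(2*q^3))^2 - (q^2 - c^2)
          = (c^4 * (c^2+q^2)^2 - 4*c^4*q^4) / (4*q^6) := by field_simp; ring
      have hcq2 : c^2 ≤ q^2 := by nlinarith
      have : c^4 * (c^2+q^2)^2 - 4*c^4*q^4 ≤ 0 := by
        nlinarith [mul_nonneg (mul_nonneg (pow_nonneg hc0 4) (sub_nonneg.2 hcq2))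
          (by positivity : (0:ℝ) ≤ 3*q^2 + c^2)]
      nlinarith [div_nonpos_of_nonpos_of_nonneg this (by positivity : (0:ℝ) ≤ 4*q^6)]
    exact key

lemma identity_G (β m x : ℝ) (hβ : 1 < β) (hx0 : 0 < x) (hx1 : x < 1)
    (hc : (m+1)*x/Real.sqrt (1 - x^2) + m*x/Real.sqrt (β^2 - x^2) = 1) :
    (m+1)/Real.sqrt (1 - x^2) + m*β^2/Real.sqrt (β^2 - x^2)
      = (m+1)*Real.sqrt (1 - x^2) + m*Real.sqrt (β^2 - x^2) + x := by
  set a := Real.sqrt (1 - x^2) with ha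
  set A := Real.sqrt (β^2 - x^2) with hA
  have h1 : (0:ℝ) < 1 - x^2 := by nlinarith
  have h2 : (0:ℝ) < β^2 - x^2 := by nlinarith
  have ha0 : 0 < a := Real.sqrt_pos.2 h1
  have hA0 : 0 < A := Real.sqrt_pos.2 h2
  have ha2 : a^2 = 1 - x^2 := Real.sq_sqrt h1.le
  have hA2 : A^2 = β^2 - x^2 := Real.sq_sqrt h2.le
  have hc' : (m+1)*x*A + m*x*a = a*A := by
    field_simp at hc; linarith [hc]
  field_simp
  linear_combination (-((m+1)*A))*ha2 - m*a*hA2 + x*hc'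

set_option maxHeartbeats 1000000 in
lemma key_setup {β m x : ℝ} (hβ : 1 < β) (hm : 1 ≤ m) (hx0 : 0 < x) (hx1 : x < 1)
    (hc : (m+1)*x/Real.sqrt (1 - x^2) + m*x/Real.sqrt (β^2 - x^2) = 1) :
    0 < β/((β+1)*m+β) - x ∧ β/((β+1)*m+β) - x ≤ 2*x^3 ∧ x ≤ 1/(m+1) := by
  have hβ0 : (0:ℝ) < β := by linarith
  obtain ⟨a, ha⟩ : ∃ a, Real.sqrt (1 - x^2) = a := ⟨_, rfl⟩
  obtain ⟨A, hA⟩ : ∃ A, Real.sqrt (β^2 - x^2) = A := ⟨_, rfl⟩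
  rw [ha, hA] at hc
  have hq : (0:ℝ) < (β+1)*m+β := by nlinarith
  set q : ℝ := (β+1)*m+β with hqdef
  have h1 : (0:ℝ) < 1 - x^2 := by nlinarith
  have h2 : (0:ℝ) < β^2 - x^2 := by nlinarith
  have ha0 : 0 < a := ha ▸ Real.sqrt_pos.2 h1
  have hA0 : 0 < A := hA ▸ Real.sqrt_pos.2 h2
  have ha2 : a^2 = 1 - x^2 := by rw [← ha]; exact Real.sq_sqrt h1.le
  have hA2 : A^2 = β^2 - x^2 := by rw [← hA]; exact Real.sq_sqrt h2.le
  clear ha hA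
  have ha1 : a < 1 := by nlinarith
  have hAβ : A < β := by nlinarith
  have hm0 : (0:ℝ) < m := by linarith
  -- x ≤ 1/(m+1)
  have hxm : x ≤ 1/(m+1) := by
    have t1 : (m+1)*x ≤ (m+1)*x/a := by
      rw [le_div_iff₀ ha0]
      nlinarith [mul_nonneg (mul_nonneg (by linarith : (0:ℝ) ≤ m+1) hx0.le)
        (by linarith : (0:ℝ) ≤ 1 - a)]
    have t2 : 0 ≤ m*x/A := by positivity
    rw [le_div_iff₀ (by linarith : (0:ℝ) < m+1)]
    nlinarith
  have hx12 : x ≤ 1/2 := by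
    have : (1:ℝ)/(m+1) ≤ 1/2 := by
      rw [div_le_div_iff₀ (by linarith) (by norm_num)]; linarith
    linarith
  have ha34 : 3/4 ≤ a := by nlinarith
  have hA34 : 3/4 ≤ A := by nlinarith
  -- e1 : 1/a - 1 ≤ x^2
  have e1 : 1/a - 1 ≤ x^2 := by
    rw [sub_le_iff_le_add, div_le_iff₀ ha0]
    nlinarith
  have e2 : 1/A - 1/β ≤ x^2 := by
    have hd : (β-A)*(β+A) = x^2 := by linear_combination -hA2
    have hprod : 1 ≤ A*β*(β+A) := by nlinarith
    have hval : 1/A - 1/β = (β-A)/(A*β) := by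
      field_simp
    rw [hval, div_le_iff₀ (by positivity)]
    nlinarith [mul_le_mul_of_nonneg_left hprod (sq_nonneg x)]
  have f1 : 1 < 1/a := by rw [lt_div_iff₀ ha0]; linarith
  have f2 : 1/β < 1/A := by rw [div_lt_div_iff₀ hβ0 hA0]; linarith
  have hceq : (m+1)*x*(1/a) + m*x*(1/A) = 1 := by
    rw [mul_one_div, mul_one_div]; exact hc
  have hsum_lo : 0 < 1 - (m+1)*x - m*x/β := by
    have g1 : (m+1)*x*1 < (m+1)*x*(1/a) := by
      apply mul_lt_mul_of_pos_left f1; positivity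
    have g2 : m*x*(1/β) < m*x*(1/A) := by
      apply mul_lt_mul_of_pos_left f2; positivity
    have hrw : m*x/β = m*x*(1/β) := by ring
    rw [hrw]; nlinarith
  have hsum_hi : 1 - (m+1)*x - m*x/β ≤ (2*m+1)*x^3 := by
    have g1 : (m+1)*x*(1/a) - (m+1)*x ≤ (m+1)*x*x^2 := by
      have := mul_le_mul_of_nonneg_left e1 (by positivity : (0:ℝ) ≤ (m+1)*x)
      nlinarith
    have g2 : m*x*(1/A) - m*x*(1/β) ≤ m*x*x^2 := by
      have := mul_le_mul_of_nonneg_left e2 (by positivity : (0:ℝ) ≤ m*x)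
      nlinarith
    have hrw : m*x/β = m*x*(1/β) := by ring
    rw [hrw]; nlinarith
  have hkey : β/q - x = (β/q)*(1 - (m+1)*x - m*x/β) := by
    rw [hqdef]; field_simp; ring
  refine ⟨?_, ?_, hxm⟩
  · rw [hkey]; positivity
  · rw [hkey]
    have h1' : (β/q)*(1 - (m+1)*x - m*x/β) ≤ (β/q)*((2*m+1)*x^3) := by
      apply mul_le_mul_of_nonneg_left hsum_hi (by positivity)
    have h2' : (β/q)*((2*m+1)*x^3) ≤ 2*x^3 := by
      rw [div_mul_eq_mul_div, div_le_iff₀ hq]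
      nlinarith
    linarith

set_option maxHeartbeats 1000000 in
lemma key_Dh {β m x p : ℝ} (hβ : 1 < β) (hm : 1 ≤ m) (hx0 : 0 < x) (hx1 : x < 1)
    (hc : (m+1)*x/Real.sqrt (1 - x^2) + m*x/Real.sqrt (β^2 - x^2) = 1)
    (hp0 : 0 < p) (hp12 : p ≤ 1/2) (hgap0 : 0 < p - x) (hgap : p - x ≤ 2*x^3)
    (hxm : x ≤ 1/(m+1)) :
    |((m+1)*Real.sqrt (1 - x^2) + m*Real.sqrt (β^2 - x^2) + x)
      - ((m+1)*Real.sqrt (1 - p^2) + m*Real.sqrt (β^2 - p^2) + p)| ≤ 8*(1+β^2)/m^3 := by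
  have hβ0 : (0:ℝ) < β := by linarith
  have hm0 : (0:ℝ) < m := by linarith
  obtain ⟨a, ha⟩ : ∃ a, Real.sqrt (1 - x^2) = a := ⟨_, rfl⟩
  obtain ⟨A, hA⟩ : ∃ A, Real.sqrt (β^2 - x^2) = A := ⟨_, rfl⟩
  obtain ⟨b, hb⟩ : ∃ b, Real.sqrt (1 - p^2) = b := ⟨_, rfl⟩
  obtain ⟨B, hB⟩ : ∃ B, Real.sqrt (β^2 - p^2) = B := ⟨_, rfl⟩
  rw [ha, hA] at hc
  rw [ha, hA, hb, hB]
  have hx12 : x ≤ 1/2 := by linarith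
  have h1 : (0:ℝ) < 1 - x^2 := by nlinarith
  have h2 : (0:ℝ) < β^2 - x^2 := by nlinarith
  have h3 : (0:ℝ) < 1 - p^2 := by nlinarith
  have h4 : (0:ℝ) < β^2 - p^2 := by nlinarith
  have ha0 : 0 < a := ha ▸ Real.sqrt_pos.2 h1
  have hA0 : 0 < A := hA ▸ Real.sqrt_pos.2 h2
  have hb0 : 0 < b := hb ▸ Real.sqrt_pos.2 h3
  have hB0 : 0 < B := hB ▸ Real.sqrt_pos.2 h4
  have ha2 : a^2 = 1 - x^2 := by rw [← ha]; exact Real.sq_sqrt h1.le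
  have hA2 : A^2 = β^2 - x^2 := by rw [← hA]; exact Real.sq_sqrt h2.le
  have hb2 : b^2 = 1 - p^2 := by rw [← hb]; exact Real.sq_sqrt h3.le
  have hB2 : B^2 = β^2 - p^2 := by rw [← hB]; exact Real.sq_sqrt h4.le
  clear ha hA hb hB
  have ha34 : 3/4 ≤ a := by nlinarith
  have hA34 : 3/4 ≤ A := by nlinarith
  have hb34 : 3/4 ≤ b := by nlinarith
  have hB34 : 3/4 ≤ B := by nlinarith
  have hpx : (0:ℝ) < p + x := by linarith
  -- identities
  have hab : a - b = (p-x)*(p+x)/(a+b) := by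
    rw [eq_div_iff (by positivity : (a+b) ≠ 0)]
    linear_combination ha2 - hb2
  have hAB : A - B = (p-x)*(p+x)/(A+B) := by
    rw [eq_div_iff (by positivity : (A+B) ≠ 0)]
    linear_combination hA2 - hB2
  have step3 : (a*p - x*b)*(a*p + x*b) = (p-x)*(p+x) := by
    linear_combination p^2*ha2 - x^2*hb2
  have step4 : (A*p - x*B)*(A*p + x*B) = β^2*((p-x)*(p+x)) := by
    linear_combination p^2*hA2 - x^2*hB2
  have hP1 : (0:ℝ) < a*p + x*b := by positivity
  have hP2 : (0:ℝ) < A*p + x*B := by positivity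
  have t1 : (p+x)/(a+b) - x/a = (p-x)*(p+x)/(a*(a+b)*(a*p+x*b)) := by
    rw [div_sub_div _ _ (by positivity : (a+b) ≠ 0) (by positivity : a ≠ 0),
      div_eq_div_iff (by positivity) (by positivity)]
    linear_combination (a*(a+b))*step3
  have t2 : (p+x)/(A+B) - x/A = β^2*((p-x)*(p+x))/(A*(A+B)*(A*p+x*B)) := by
    rw [div_sub_div _ _ (by positivity : (A+B) ≠ 0) (by positivity : A ≠ 0),
      div_eq_div_iff (by positivity) (by positivity)]
    linear_combination (A*(A+B))*step4
  -- Dh representation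
  have h3' : (p-x)*((m+1)*x/a + m*x/A) = p - x := by rw [hc, mul_one]
  have hDh : ((m+1)*a + m*A + x) - ((m+1)*b + m*B + p)
      = (p-x)*((m+1)*((p+x)/(a+b) - x/a) + m*((p+x)/(A+B) - x/A)) := by
    linear_combination (m+1)*hab + m*hAB + h3'
  -- lower bounds on bracket terms
  have hu1_lo : 0 ≤ (p+x)/(a+b) - x/a := by rw [t1]; positivity
  have hu2_lo : 0 ≤ (p+x)/(A+B) - x/A := by rw [t2]; positivity
  -- denominators bounded below
  have hP1' : (3:ℝ)/4*(p+x) ≤ a*p + x*b := by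
    have g1 : (3:ℝ)/4*p ≤ a*p := mul_le_mul_of_nonneg_right ha34 hp0.le
    have g2 : x*(3/4) ≤ x*b := mul_le_mul_of_nonneg_left hb34 hx0.le
    linarith
  have hP2' : (3:ℝ)/4*(p+x) ≤ A*p + x*B := by
    have g1 : (3:ℝ)/4*p ≤ A*p := mul_le_mul_of_nonneg_right hA34 hp0.le
    have g2 : x*(3/4) ≤ x*B := mul_le_mul_of_nonneg_left hB34 hx0.le
    linarith
  have hD1 : (27:ℝ)/32*(p+x) ≤ a*(a+b)*(a*p+x*b) := by
    have g1 : (3:ℝ)/4*(3/2) ≤ a*(a+b) :=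
      mul_le_mul ha34 (by linarith) (by norm_num) (by linarith)
    have g2 : ((3:ℝ)/4*(3/2))*((3:ℝ)/4*(p+x)) ≤ (a*(a+b))*(a*p+x*b) :=
      mul_le_mul g1 hP1' (by positivity) (by positivity)
    linarith [g2]
  have hD2' : (27:ℝ)/32*(p+x) ≤ A*(A+B)*(A*p+x*B) := by
    have g1 : (3:ℝ)/4*(3/2) ≤ A*(A+B) :=
      mul_le_mul hA34 (by linarith) (by norm_num) (by linarith)
    have g2 : ((3:ℝ)/4*(3/2))*((3:ℝ)/4*(p+x)) ≤ (A*(A+B))*(A*p+x*B) :=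
      mul_le_mul g1 hP2' (by positivity) (by positivity)
    linarith [g2]
  have hu1_hi : (p+x)/(a+b) - x/a ≤ 2*(p-x) := by
    rw [t1]
    have e1 : (p-x)*(p+x)/(a*(a+b)*(a*p+x*b)) ≤ (p-x)*(p+x)/((27/32)*(p+x)) := by
      gcongr
      all_goals first
        | exact hD1
        | positivity
    have e2 : (p-x)*(p+x)/((27/32)*(p+x)) = (32/27)*(p-x) := by
      rw [div_eq_iff (by positivity : ((27:ℝ)/32)*(p+x) ≠ 0)]; ring
    rw [e2] at e1
    linarith
  have hu2_hi : (p+x)/(A+B) - x/A ≤ 2*β^2*(p-x) := by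
    rw [t2]
    have e1 : β^2*((p-x)*(p+x))/(A*(A+B)*(A*p+x*B)) ≤ β^2*((p-x)*(p+x))/((27/32)*(p+x)) := by
      gcongr
      all_goals first
        | exact hD2'
        | positivity
    have e2 : β^2*((p-x)*(p+x))/((27/32)*(p+x)) = (32/27)*β^2*(p-x) := by
      rw [div_eq_iff (by positivity : ((27:ℝ)/32)*(p+x) ≠ 0)]; ring
    rw [e2] at e1
    have hnn : 0 ≤ β^2*(p-x) := mul_nonneg (sq_nonneg β) hgap0.le
    linarith [e1, hnn]
  -- assemble
  have hbr_lo : 0 ≤ (m+1)*((p+x)/(a+b) - x/a) + m*((p+x)/(A+B) - x/A) :=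
    add_nonneg (mul_nonneg (by linarith) hu1_lo) (mul_nonneg hm0.le hu2_lo)
  have hDh_lo : 0 ≤ ((m+1)*a + m*A + x) - ((m+1)*b + m*B + p) := by
    rw [hDh]; exact mul_nonneg hgap0.le hbr_lo
  have hbr_hi : (m+1)*((p+x)/(a+b) - x/a) + m*((p+x)/(A+B) - x/A)
      ≤ 2*(m+1)*(1+β^2)*(p-x) := by
    have b1 : (m+1)*((p+x)/(a+b) - x/a) ≤ (m+1)*(2*(p-x)) :=
      mul_le_mul_of_nonneg_left hu1_hi (by linarith)
    have b2 : m*((p+x)/(A+B) - x/A) ≤ m*(2*β^2*(p-x)) :=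
      mul_le_mul_of_nonneg_left hu2_hi hm0.le
    have hnn : 0 ≤ β^2*(p-x) := mul_nonneg (sq_nonneg β) hgap0.le
    linarith [b1, b2, hnn]
  have hDh_hi : ((m+1)*a + m*A + x) - ((m+1)*b + m*B + p) ≤ 2*(m+1)*(1+β^2)*(p-x)^2 := by
    rw [hDh]
    calc (p-x)*((m+1)*((p+x)/(a+b) - x/a) + m*((p+x)/(A+B) - x/A))
        ≤ (p-x)*(2*(m+1)*(1+β^2)*(p-x)) := mul_le_mul_of_nonneg_left hbr_hi hgap0.le
      _ = 2*(m+1)*(1+β^2)*(p-x)^2 := by ring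
  -- numeric bound
  have hDsq : (p-x)^2 ≤ 4*x^6 := by
    have := pow_le_pow_left₀ hgap0.le hgap 2
    calc (p-x)^2 ≤ (2*x^3)^2 := this
      _ = 4*x^6 := by ring
  have hx6 : x^6 ≤ (1/(m+1))^6 := pow_le_pow_left₀ hx0.le hxm 6
  have hfin : 2*(m+1)*(1+β^2)*(p-x)^2 ≤ 8*(1+β^2)/m^3 := by
    have c0 : (0:ℝ) ≤ 2*(m+1)*(1+β^2) := by positivity
    have s1 : 2*(m+1)*(1+β^2)*(p-x)^2 ≤ 2*(m+1)*(1+β^2)*(4*x^6) :=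
      mul_le_mul_of_nonneg_left hDsq c0
    have s2 : 2*(m+1)*(1+β^2)*(4*x^6) ≤ 2*(m+1)*(1+β^2)*(4*(1/(m+1))^6) := by
      apply mul_le_mul_of_nonneg_left _ c0
      linarith [hx6]
    have s3 : 2*(m+1)*(1+β^2)*(4*(1/(m+1))^6) = 8*(1+β^2)/(m+1)^5 := by
      field_simp
      ring
    have s4 : 8*(1+β^2)/(m+1)^5 ≤ 8*(1+β^2)/m^3 := by
      gcongr
      all_goals first
        | positivity
        | (calc m^3 ≤ (m+1)^3 := pow_le_pow_left₀ hm0.le (by linarith) 3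
            _ ≤ (m+1)^5 := pow_le_pow_right₀ (by linarith) (by norm_num))
    linarith [s1, s2, s3.le, s4]
  rw [abs_le]
  constructor
  · linarith
  · linarith
set_option maxHeartbeats 1000000 in
lemma key_exp {β m : ℝ} (hβ : 1 < β) (hm : 1 ≤ m) :
    |((m+1)*Real.sqrt (1 - (β/((β+1)*m+β))^2) + m*Real.sqrt (β^2 - (β/((β+1)*m+β))^2)
        + β/((β+1)*m+β))
      - ((β+1)*m + 1 + β/(2*((β+1)*m+β)))| ≤ (β^4+β)/m^3 := by
  have hβ0 : (0:ℝ) < β := by linarith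
  have hm0 : (0:ℝ) < m := by linarith
  have hq : (0:ℝ) < (β+1)*m+β := by nlinarith
  have hq2m : 2*m ≤ (β+1)*m+β := by nlinarith
  have hqβ : β ≤ (β+1)*m+β := by nlinarith
  have hq1 : 1 ≤ (β+1)*m+β := by nlinarith
  set q : ℝ := (β+1)*m+β with hqdef
  set p : ℝ := β/q with hpdef
  have hpq : p*q = β := by rw [hpdef]; field_simp
  -- sqrt rewrites
  have e1 : Real.sqrt (1 - p^2)*q = Real.sqrt (q^2 - β^2) := by
    have h1p : (1 - p^2)*q^2 = q^2 - β^2 := by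
      rw [hpdef]; field_simp; try ring
    have h1pn : (0:ℝ) ≤ 1 - p^2 := by
      have hx : (0:ℝ) ≤ (1-p^2)*q^2 := h1p ▸ (by nlinarith : (0:ℝ) ≤ q^2 - β^2)
      nlinarith [hx, mul_pos hq hq]
    calc Real.sqrt (1 - p^2)*q = Real.sqrt (1 - p^2)*Real.sqrt (q^2) := by
          rw [Real.sqrt_sq hq.le]
      _ = Real.sqrt ((1 - p^2)*q^2) := (Real.sqrt_mul h1pn _).symm
      _ = Real.sqrt (q^2 - β^2) := by rw [h1p]
  have e2 : Real.sqrt (β^2 - p^2)*q = β*Real.sqrt (q^2 - 1) := by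
    have h2p : (β^2 - p^2)*q^2 = β^2*(q^2 - 1) := by
      rw [hpdef]; field_simp; try ring
    have h2pn : (0:ℝ) ≤ β^2 - p^2 := by
      have hq21 : (0:ℝ) ≤ q^2 - 1 := by nlinarith
      have hx : (0:ℝ) ≤ (β^2-p^2)*q^2 := h2p ▸ mul_nonneg (sq_nonneg β) hq21
      nlinarith [hx, mul_pos hq hq]
    calc Real.sqrt (β^2 - p^2)*q = Real.sqrt (β^2 - p^2)*Real.sqrt (q^2) := by
          rw [Real.sqrt_sq hq.le]
      _ = Real.sqrt ((β^2 - p^2)*q^2) := (Real.sqrt_mul h2pn _).symm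
      _ = Real.sqrt (β^2*(q^2 - 1)) := by rw [h2p]
      _ = Real.sqrt (β^2)*Real.sqrt (q^2 - 1) := Real.sqrt_mul (sq_nonneg β) _
      _ = β*Real.sqrt (q^2 - 1) := by rw [Real.sqrt_sq hβ0.le]
  have u1 := sqrtq_upper q β hq hβ0.le hqβ
  have l1 := sqrtq_lower q β hq hβ0.le hqβ
  have u2 := sqrtq_upper q 1 hq zero_le_one hq1
  have l2 := sqrtq_lower q 1 hq zero_le_one hq1
  simp only [one_pow] at u2 l2
  -- target times q
  have hT : ((β+1)*m + 1 + β/(2*q))*q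
      = (m+1)*(q - β^2/(2*q)) + m*(β*(q - 1/(2*q))) + β := by
    rw [hqdef]; field_simp; try ring
  set H : ℝ := (m+1)*Real.sqrt (1 - p^2) + m*Real.sqrt (β^2 - p^2) + p with hHdef
  set T : ℝ := (β+1)*m + 1 + β/(2*q) with hTdef
  have hHq : H*q = (m+1)*(Real.sqrt (1 - p^2)*q) + m*(Real.sqrt (β^2 - p^2)*q) + β := by
    rw [hHdef, ← hpq]; ring
  clear_value H T
  have hupper : H*q ≤ T*q := by
    rw [hHq, e1, e2, hT]
    have b1 : (m+1)*Real.sqrt (q^2-β^2) ≤ (m+1)*(q - β^2/(2*q)) :=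
      mul_le_mul_of_nonneg_left u1 (by linarith)
    have b2 : m*(β*Real.sqrt (q^2-1)) ≤ m*(β*(q - 1/(2*q))) := by
      apply mul_le_mul_of_nonneg_left _ hm0.le
      exact mul_le_mul_of_nonneg_left u2 hβ0.le
    linarith
  have hlower : T*q - ((m+1)*β^4 + m*β)/(2*q^3) ≤ H*q := by
    rw [hHq, e1, e2, hT]
    have b1 : (m+1)*(q - β^2/(2*q) - β^4/(2*q^3)) ≤ (m+1)*Real.sqrt (q^2-β^2) :=
      mul_le_mul_of_nonneg_left l1 (by linarith)
    have b2 : m*(β*(q - 1/(2*q) - 1/(2*q^3))) ≤ m*(β*Real.sqrt (q^2-1)) := by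
      apply mul_le_mul_of_nonneg_left _ hm0.le
      exact mul_le_mul_of_nonneg_left l2 hβ0.le
    have expand : (m+1)*(q - β^2/(2*q) - β^4/(2*q^3)) + m*(β*(q - 1/(2*q) - 1/(2*q^3)))
        = (m+1)*(q - β^2/(2*q)) + m*(β*(q - 1/(2*q))) - ((m+1)*β^4 + m*β)/(2*q^3) := by
      field_simp
      try ring
    linarith
  -- conclude
  have hHT1 : H ≤ T := le_of_mul_le_mul_right hupper hq
  have hHT2 : T - H ≤ ((m+1)*β^4 + m*β)/(2*q^4) := by
    have step : (T - H)*q ≤ ((m+1)*β^4 + m*β)/(2*q^3) := by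
      have e : (T-H)*q = T*q - H*q := by ring
      linarith [hlower, e.le, e.ge]
    have h2 : T - H ≤ (((m+1)*β^4 + m*β)/(2*q^3))/q := (le_div_iff₀ hq).2 step
    calc T - H ≤ (((m+1)*β^4 + m*β)/(2*q^3))/q := h2
      _ = ((m+1)*β^4 + m*β)/(2*q^4) := by
          rw [div_div]; congr 1; ring
  have hN : (m+1)*β^4 + m*β ≤ 2*m*(β^4+β) := by nlinarith [pow_nonneg hβ0.le 4]
  have hq4 : 2*m^4 ≤ 2*q^4 := by
    have hmq : m ≤ q := by nlinarith
    have := pow_le_pow_left₀ hm0.le hmq 4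
    linarith
  have hbound : ((m+1)*β^4 + m*β)/(2*q^4) ≤ (β^4+β)/m^3 := by
    calc ((m+1)*β^4 + m*β)/(2*q^4) ≤ (2*m*(β^4+β))/(2*m^4) := by
          apply div_le_div₀ (by positivity) hN (by positivity) hq4
      _ = (β^4+β)/m^3 := by field_simp; try ring
  rw [abs_le]
  constructor
  · linarith [hHT2, hbound]
  · have h0 : H - T ≤ 0 := by linarith [hHT1]
    have hpos : 0 ≤ (β^4+β)/m^3 := by positivity
    linarith

set_option maxHeartbeats 1000000 in
lemma key_diff {β : ℝ} (hβ : 1 < β) (k : ℝ) (hk : 1 ≤ k) :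
    |((((β+1)*(k+1) + 1 + β/(2*((β+1)*(k+1)+β))) - ((β+1)*k + 1 + β/(2*((β+1)*k+β))) - 2)
      - ((β - 1) - β/(2*(β+1))*(k^2)⁻¹))| ≤ β^3/k^3 := by
  have hβ0 : (0:ℝ) < β := by linarith
  have hk0 : (0:ℝ) < k := by linarith
  have hq0 : (0:ℝ) < (β+1)*k+β := by nlinarith
  have hq1 : (0:ℝ) < (β+1)*(k+1)+β := by nlinarith
  have hX : (((β+1)*(k+1) + 1 + β/(2*((β+1)*(k+1)+β))) - ((β+1)*k + 1 + β/(2*((β+1)*k+β))) - 2)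
      - ((β - 1) - β/(2*(β+1))*(k^2)⁻¹)
      = (β*((((β+1)*k+β)*((β+1)*(k+1)+β)) - (β+1)^2*k^2))
        /(2*(β+1)*k^2*(((β+1)*k+β)*((β+1)*(k+1)+β))) := by
    field_simp
    ring
  rw [hX]
  have hNlo : 0 ≤ (((β+1)*k+β)*((β+1)*(k+1)+β)) - (β+1)^2*k^2 := by nlinarith
  have hNhi : (((β+1)*k+β)*((β+1)*(k+1)+β)) - (β+1)^2*k^2 ≤ 11*β^2*k := by
    nlinarith [mul_nonneg (by nlinarith : (0:ℝ) ≤ 8*β^2-4*β-1) (by linarith : (0:ℝ) ≤ k-1),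
      mul_nonneg (by linarith : (0:ℝ) ≤ β-1) (by linarith : (0:ℝ) ≤ 6*β+1)]
  have hNlo' : (β+1)^2*k^2 ≤ (((β+1)*k+β)*((β+1)*(k+1)+β)) := by linarith
  have hDlo : 2*(β+1)^3*k^4 ≤ 2*(β+1)*k^2*(((β+1)*k+β)*((β+1)*(k+1)+β)) := by
    nlinarith [mul_le_mul_of_nonneg_left hNlo' (by positivity : (0:ℝ) ≤ 2*(β+1)*k^2)]
  have habs : |(β*((((β+1)*k+β)*((β+1)*(k+1)+β)) - (β+1)^2*k^2))
        /(2*(β+1)*k^2*(((β+1)*k+β)*((β+1)*(k+1)+β)))|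
      = (β*((((β+1)*k+β)*((β+1)*(k+1)+β)) - (β+1)^2*k^2))
        /(2*(β+1)*k^2*(((β+1)*k+β)*((β+1)*(k+1)+β))) := by
    apply abs_of_nonneg
    apply div_nonneg (by nlinarith) (by positivity)
  rw [habs]
  calc (β*((((β+1)*k+β)*((β+1)*(k+1)+β)) - (β+1)^2*k^2))
        /(2*(β+1)*k^2*(((β+1)*k+β)*((β+1)*(k+1)+β)))
      ≤ (β*(11*β^2*k))/(2*(β+1)^3*k^4) := by
        apply div_le_div₀ (by positivity) (by nlinarith) (by positivity) hDlo
    _ ≤ β^3/k^3 := by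
        rw [div_le_div_iff₀ (by positivity) (by positivity)]
        nlinarith [mul_nonneg (mul_nonneg (pow_nonneg hβ0.le 3) (pow_nonneg hk0.le 4))
          (by nlinarith : (0:ℝ) ≤ 2*(β+1)^3 - 11)]

end Stmt11Aux

open Stmt11Aux in
set_option maxHeartbeats 1000000 in
theorem stmt_11 (β : ℝ) (hβ : 1 < β) (σ τ : ℕ → ℝ)
    (hσrange : ∀ k : ℕ, σ k ∈ Set.Ioo (0 : ℝ) 1)
    (hτrange : ∀ k : ℕ, τ k ∈ Set.Ioo (0 : ℝ) 1)
    (hσeq : ∀ k : ℕ, ((k : ℝ) + 1) * σ k / Real.sqrt (1 - (σ k) ^ 2)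
        + (k : ℝ) * σ k / Real.sqrt (β ^ 2 - (σ k) ^ 2) = 1)
    (hτeq : ∀ k : ℕ, ((k : ℝ) + 2) * τ k / Real.sqrt (1 - (τ k) ^ 2)
        + ((k : ℝ) + 1) * τ k / Real.sqrt (β ^ 2 - (τ k) ^ 2) = 1)
    (δ : ℕ → ℝ)
    (hδ : ∀ k : ℕ, δ k = ((k : ℝ) + 2) / Real.sqrt (1 - (τ k) ^ 2)
        + ((k : ℝ) + 1) * β ^ 2 / Real.sqrt (β ^ 2 - (τ k) ^ 2)
        - ((k : ℝ) + 1) / Real.sqrt (1 - (σ k) ^ 2)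
        - (k : ℝ) * β ^ 2 / Real.sqrt (β ^ 2 - (σ k) ^ 2) - 2) :
    (fun k : ℕ => δ k - ((β - 1) - β / (2 * (β + 1)) * ((k : ℝ) ^ 2)⁻¹))
        =O[atTop] (fun k : ℕ => ((k : ℝ) ^ 3)⁻¹) ∧
      Tendsto δ atTop (nhds (β - 1)) := by
  have hβ0 : (0:ℝ) < β := by linarith
  set C : ℝ := 2*(8*(1+β^2)+(β^4+β))+β^3 with hCdef
  have key : ∀ k : ℕ, 1 ≤ (k:ℝ) →
      |δ k - ((β - 1) - β / (2 * (β + 1)) * ((k : ℝ) ^ 2)⁻¹)| ≤ C/(k:ℝ)^3 := by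
    intro k hK
    set K : ℝ := (k:ℝ) with hKdef
    clear_value K
    have hK0 : (0:ℝ) < K := by linarith
    have hK1 : (1:ℝ) ≤ K + 1 := by linarith
    -- σ side (m = K)
    have hσr := hσrange k
    have hcσ : (K+1) * σ k / Real.sqrt (1 - (σ k) ^ 2)
        + K * σ k / Real.sqrt (β ^ 2 - (σ k) ^ 2) = 1 := by
      rw [hKdef]; exact hσeq k
    obtain ⟨hg0σ, hg1σ, hg2σ⟩ := key_setup hβ hK hσr.1 hσr.2 hcσ
    have idσ := identity_G β K (σ k) hβ hσr.1 hσr.2 hcσ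
    have hβK : 0 < β*K := mul_pos hβ0 hK0
    have hβK1 : β*1 ≤ β*K := mul_le_mul_of_nonneg_left hK hβ0.le
    have hqσ : (0:ℝ) < (β+1)*K+β := by nlinarith [hβK]
    have hp0σ : 0 < β/((β+1)*K+β) := div_pos hβ0 hqσ
    have hp12σ : β/((β+1)*K+β) ≤ 1/2 := by
      rw [div_le_iff₀ hqσ]; nlinarith [hβK1]
    have Dhσ := key_Dh hβ hK hσr.1 hσr.2 hcσ hp0σ hp12σ hg0σ hg1σ hg2σ
    have expσ := key_exp (m := K) hβ hK
    -- τ side (m = K+1)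
    have hτr := hτrange k
    have hcτ : ((K+1)+1) * τ k / Real.sqrt (1 - (τ k) ^ 2)
        + (K+1) * τ k / Real.sqrt (β ^ 2 - (τ k) ^ 2) = 1 := by
      rw [show (K+1)+1 = K+2 from by ring, hKdef]; exact hτeq k
    obtain ⟨hg0τ, hg1τ, hg2τ⟩ := key_setup hβ hK1 hτr.1 hτr.2 hcτ
    have idτ := identity_G β (K+1) (τ k) hβ hτr.1 hτr.2 hcτ
    have hqτ : (0:ℝ) < (β+1)*(K+1)+β := by nlinarith [hβK]
    have hp0τ : 0 < β/((β+1)*(K+1)+β) := div_pos hβ0 hqτ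
    have hp12τ : β/((β+1)*(K+1)+β) ≤ 1/2 := by
      rw [div_le_iff₀ hqτ]; nlinarith [hβK]
    have Dhτ := key_Dh hβ hK1 hτr.1 hτr.2 hcτ hp0τ hp12τ hg0τ hg1τ hg2τ
    have expτ := key_exp (m := K+1) hβ hK1
    -- monotone transfer of (K+1)⁻³ bounds to K⁻³
    have hK3 : K^3 ≤ (K+1)^3 := pow_le_pow_left₀ hK0.le (by linarith) 3
    have hmono1 : 8*(1+β^2)/(K+1)^3 ≤ 8*(1+β^2)/K^3 := by
      gcongr
      all_goals first
        | positivity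
        | exact hK3
    have hmono2 : (β^4+β)/(K+1)^3 ≤ (β^4+β)/K^3 := by
      gcongr
      all_goals first
        | positivity
        | exact hK3
    have hdiff := key_diff hβ K hK
    -- opaque error terms
    obtain ⟨E1, hE1⟩ : ∃ E1, ((K+1)*Real.sqrt (1 - (σ k)^2) + K*Real.sqrt (β^2 - (σ k)^2) + σ k)
        - ((K+1)*Real.sqrt (1 - (β/((β+1)*K+β))^2) + K*Real.sqrt (β^2 - (β/((β+1)*K+β))^2)
          + β/((β+1)*K+β)) = E1 := ⟨_, rfl⟩
    obtain ⟨E2, hE2⟩ : ∃ E2, ((K+1)*Real.sqrt (1 - (β/((β+1)*K+β))^2)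
          + K*Real.sqrt (β^2 - (β/((β+1)*K+β))^2) + β/((β+1)*K+β))
        - ((β+1)*K + 1 + β/(2*((β+1)*K+β))) = E2 := ⟨_, rfl⟩
    obtain ⟨E3, hE3⟩ : ∃ E3, (((K+1)+1)*Real.sqrt (1 - (τ k)^2) + (K+1)*Real.sqrt (β^2 - (τ k)^2) + τ k)
        - (((K+1)+1)*Real.sqrt (1 - (β/((β+1)*(K+1)+β))^2) + (K+1)*Real.sqrt (β^2 - (β/((β+1)*(K+1)+β))^2)
          + β/((β+1)*(K+1)+β)) = E3 := ⟨_, rfl⟩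
    obtain ⟨E4, hE4⟩ : ∃ E4, (((K+1)+1)*Real.sqrt (1 - (β/((β+1)*(K+1)+β))^2)
          + (K+1)*Real.sqrt (β^2 - (β/((β+1)*(K+1)+β))^2) + β/((β+1)*(K+1)+β))
        - ((β+1)*(K+1) + 1 + β/(2*((β+1)*(K+1)+β))) = E4 := ⟨_, rfl⟩
    obtain ⟨E5, hE5⟩ : ∃ E5, ((((β+1)*(K+1) + 1 + β/(2*((β+1)*(K+1)+β)))
          - ((β+1)*K + 1 + β/(2*((β+1)*K+β))) - 2)
        - ((β - 1) - β/(2*(β+1))*(K^2)⁻¹)) = E5 := ⟨_, rfl⟩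
    rw [hE1] at Dhσ
    rw [hE2] at expσ
    rw [hE3] at Dhτ
    rw [hE4] at expτ
    rw [hE5] at hdiff
    rw [hδ k, ← hKdef]
    rw [show K+2 = (K+1)+1 from by ring]
    have hEq : (((K+1)+1) / Real.sqrt (1 - (τ k)^2) + (K+1)*β^2 / Real.sqrt (β^2 - (τ k)^2)
          - (K+1) / Real.sqrt (1 - (σ k)^2) - K*β^2 / Real.sqrt (β^2 - (σ k)^2) - 2)
        - ((β - 1) - β/(2*(β+1))*(K^2)⁻¹) = (E3 + E4 + E5) - (E1 + E2) := by
      rw [← hE1, ← hE2, ← hE3, ← hE4, ← hE5]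
      linear_combination idτ - idσ
    calc |(((K+1)+1) / Real.sqrt (1 - (τ k)^2) + (K+1)*β^2 / Real.sqrt (β^2 - (τ k)^2)
          - (K+1) / Real.sqrt (1 - (σ k)^2) - K*β^2 / Real.sqrt (β^2 - (σ k)^2) - 2)
        - ((β - 1) - β/(2*(β+1))*(K^2)⁻¹)|
        = |(E3 + E4 + E5) - (E1 + E2)| := by rw [hEq]
      _ ≤ |E3 + E4 + E5| + |E1 + E2| := abs_sub _ _
      _ ≤ (|E3| + |E4| + |E5|) + (|E1| + |E2|) :=
          add_le_add (abs_add_three _ _ _) (abs_add_le _ _)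
      _ ≤ C/K^3 := by
          rw [hCdef]
          have hK3pos : (0:ℝ) < K^3 := by positivity
          have b3 := le_trans Dhτ hmono1
          have b4 := le_trans expτ hmono2
          rw [le_div_iff₀ hK3pos]
          have c1 := (le_div_iff₀ hK3pos).mp Dhσ
          have c2 := (le_div_iff₀ hK3pos).mp expσ
          have c3 := (le_div_iff₀ hK3pos).mp b3
          have c4 := (le_div_iff₀ hK3pos).mp b4
          have c5 := (le_div_iff₀ hK3pos).mp hdiff
          linarith [c1, c2, c3, c4, c5]
  constructor
  · rw [isBigO_iff]
    refine ⟨C, ?_⟩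
    filter_upwards [eventually_ge_atTop 1] with k hk1
    have hK : (1:ℝ) ≤ (k:ℝ) := by exact_mod_cast hk1
    have hK0 : (0:ℝ) < (k:ℝ) := by linarith
    rw [Real.norm_eq_abs, Real.norm_eq_abs, abs_of_nonneg (by positivity : (0:ℝ) ≤ ((k:ℝ)^3)⁻¹)]
    calc |δ k - ((β - 1) - β / (2 * (β + 1)) * ((k : ℝ) ^ 2)⁻¹)| ≤ C/(k:ℝ)^3 := key k hK
      _ = C * ((k:ℝ)^3)⁻¹ := div_eq_mul_inv _ _
  · have hnat : Tendsto (fun k : ℕ => (k:ℝ)) atTop atTop := tendsto_natCast_atTop_atTop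
    have t2 : Tendsto (fun k : ℕ => ((k:ℝ)^2)⁻¹) atTop (nhds 0) :=
      tendsto_inv_atTop_zero.comp ((tendsto_pow_atTop (by norm_num : 2 ≠ 0)).comp hnat)
    have t3 : Tendsto (fun k : ℕ => ((k:ℝ)^3)⁻¹) atTop (nhds 0) :=
      tendsto_inv_atTop_zero.comp ((tendsto_pow_atTop (by norm_num : 3 ≠ 0)).comp hnat)
    have hmain : Tendsto (fun k : ℕ => (β - 1) - β / (2 * (β + 1)) * ((k : ℝ) ^ 2)⁻¹)
        atTop (nhds (β - 1)) := by
      have h := t2.const_mul (β / (2 * (β + 1)))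
      have h2 := Tendsto.const_sub (β - 1) h
      simpa using h2
    have herr : Tendsto (fun k : ℕ => δ k - ((β - 1) - β / (2 * (β + 1)) * ((k : ℝ) ^ 2)⁻¹))
        atTop (nhds 0) := by
      have hO : (fun k : ℕ => δ k - ((β - 1) - β / (2 * (β + 1)) * ((k : ℝ) ^ 2)⁻¹))
          =O[atTop] (fun k : ℕ => ((k : ℝ) ^ 3)⁻¹) := by
        rw [isBigO_iff]
        refine ⟨C, ?_⟩
        filter_upwards [eventually_ge_atTop 1] with k hk1
        have hK : (1:ℝ) ≤ (k:ℝ) := by exact_mod_cast hk1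
        have hK0 : (0:ℝ) < (k:ℝ) := by linarith
        rw [Real.norm_eq_abs, Real.norm_eq_abs,
          abs_of_nonneg (by positivity : (0:ℝ) ≤ ((k:ℝ)^3)⁻¹)]
        calc |δ k - ((β - 1) - β / (2 * (β + 1)) * ((k : ℝ) ^ 2)⁻¹)| ≤ C/(k:ℝ)^3 := key k hK
          _ = C * ((k:ℝ)^3)⁻¹ := div_eq_mul_inv _ _
      exact hO.trans_tendsto t3
    have : (fun k : ℕ => (β - 1) - β / (2 * (β + 1)) * ((k : ℝ) ^ 2)⁻¹
        + (δ k - ((β - 1) - β / (2 * (β + 1)) * ((k : ℝ) ^ 2)⁻¹))) = δ := by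
      funext k; ring
    rw [← this]
    simpa using hmain.add herr
end

section
/- With δ(k,β) as above, for each fixed k ∈ ℕ the function β ↦ δ(k,β) is strictly increasing on [1, +∞); moreover δ(k,1) < 0 and δ(k,√2) > 0. Consequently, for each k ∈ ℕ there exists a unique βᶜ_k ∈ (1, √2) with δ(k, βᶜ_k) = 0. -/
/-!
Put `G_m(β, t) = (m + 1)√(1 - t²) + m√(β² - t²) + t`, a concave function of `t`. The equations
defining `σ` and `τ` say `∂G/∂t = 0`, so `σ(k, β)` and `τ(k, β)` maximise `G_k(β, ·)` and
`G_{k+1}(β, ·)` on `[0, 1]`, and at the maximiser the terms of `δ` collapse to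
`δ(k, β) = max G_{k+1}(β, ·) - max G_k(β, ·) - 2`.

Bounding each maximum below by the value at the other maximiser compares `δ(k, β)` and `δ(k, β')`
through the increments `√(β'² - x) - √(β² - x) = (β'² - β²)/(√(β'² - x) + √(β² - x))`, weighted by
`k + 1` at `x = τ²` and by `k` at `x = σ²`; since `(k + 1)σ < 1` this gives strict monotonicity, and
the same comparison gives the modulus of continuity `(k + 1)√(β'² - β²)`. At `β = 1`, comparing with
`G_k(1, τ)` leaves `δ(k, 1) ≤ 2√(1 - τ²) - 2 < 0`. At `β = √2`, `G_m` is affine in `m`, so its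
maximum is convex in `m` and `δ(k, √2) ≥ δ(0, √2) ≥ G_1(√2, 1/3) - √2 - 2 > 0`. The zero is then
given by the intermediate value theorem.
-/

open Real Set Filter Topology

lemma sqrt_sub_sq_le_div {c t u : ℝ} (ht : t ^ 2 ≤ c) (hu : u ^ 2 < c) :
    √(c - t ^ 2) ≤ (c - t * u) / √(c - u ^ 2) := by
  have hcu : 0 < c - u ^ 2 := by linarith
  rw [le_div_iff₀ (sqrt_pos.mpr hcu), ← sqrt_mul (by linarith)]
  calc √((c - t ^ 2) * (c - u ^ 2)) ≤ √((c - t * u) ^ 2) :=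
        sqrt_le_sqrt (by nlinarith [sq_nonneg (t - u)])
    _ = c - t * u := sqrt_sq (by nlinarith [sq_nonneg (t - u), sq_nonneg (t + u)])

lemma sqrt_one_sub_sq_add_le_sqrt_two {t : ℝ} (ht : t ^ 2 ≤ 1) : √(1 - t ^ 2) + t ≤ √2 := by
  have h := sq_sqrt (show 0 ≤ 1 - t ^ 2 by linarith)
  refine (le_abs_self _).trans (abs_le_sqrt ?_)
  nlinarith [sq_nonneg (√(1 - t ^ 2) - t)]

lemma sqrt_add_le_add_sqrt {x y : ℝ} (hx : 0 ≤ x) (hy : 0 ≤ y) : √(x + y) ≤ √x + √y := by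
  rw [sqrt_le_left (by positivity), add_sq, sq_sqrt hx, sq_sqrt hy]
  nlinarith [mul_nonneg (sqrt_nonneg x) (sqrt_nonneg y)]

lemma mul_sqrt_lt_mul_sqrt {K c s t : ℝ} (hK : 0 ≤ K) (hc : 1 ≤ c) (ht : t ^ 2 ≤ 1) (hs : 0 ≤ s)
    (hKs : (K + 1) * s < 1) : K * √(c - t ^ 2) < (K + 1) * √(c - s ^ 2) := by
  refine lt_of_pow_lt_pow_left₀ 2 (by positivity) ?_
  rw [mul_pow, mul_pow, sq_sqrt (by linarith), sq_sqrt (by nlinarith)]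
  nlinarith [mul_nonneg hK (sq_nonneg t), mul_nonneg hs hK]

lemma mul_sqrt_sub_sqrt_lt {K b b' s t : ℝ} (hK : 0 ≤ K) (hb : 1 ≤ b) (hbb' : b < b')
    (ht : t ^ 2 ≤ 1) (hs : 0 ≤ s) (hKs : (K + 1) * s < 1) :
    K * (√(b' ^ 2 - s ^ 2) - √(b ^ 2 - s ^ 2)) <
      (K + 1) * (√(b' ^ 2 - t ^ 2) - √(b ^ 2 - t ^ 2)) := by
  have hb2 : 1 ≤ b ^ 2 := by nlinarith
  have hb'2 : 1 ≤ b' ^ 2 := by nlinarith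
  have hD : 0 < b' ^ 2 - b ^ 2 := by nlinarith
  have hs2 : s ^ 2 ≤ 1 := by nlinarith
  have hdiff : ∀ x, x ≤ 1 → 0 < √(b' ^ 2 - x) + √(b ^ 2 - x) ∧ √(b' ^ 2 - x) - √(b ^ 2 - x) =
      (b' ^ 2 - b ^ 2) / (√(b' ^ 2 - x) + √(b ^ 2 - x)) := by
    intro x hx
    have h1 := sq_sqrt (show 0 ≤ b' ^ 2 - x by linarith)
    have h2 := sq_sqrt (show 0 ≤ b ^ 2 - x by linarith)
    have hpos : 0 < √(b' ^ 2 - x) + √(b ^ 2 - x) :=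
      add_pos_of_pos_of_nonneg (sqrt_pos.mpr (by linarith)) (sqrt_nonneg _)
    refine ⟨hpos, ?_⟩
    rw [eq_div_iff hpos.ne']
    linear_combination h1 - h2
  obtain ⟨hs_pos, hs_eq⟩ := hdiff _ hs2
  obtain ⟨ht_pos, ht_eq⟩ := hdiff _ ht
  rw [hs_eq, ht_eq, mul_div_assoc', mul_div_assoc',
    div_lt_div_iff₀ hs_pos ht_pos]
  have := mul_sqrt_lt_mul_sqrt hK hb2 ht hs hKs
  have := mul_sqrt_lt_mul_sqrt hK hb'2 ht hs hKs
  nlinarith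

lemma continuousOn_of_monotoneOn_of_sub_le {f : ℝ → ℝ} {s : Set ℝ} {C : ℝ} (hf : MonotoneOn f s)
    (hC : ∀ x ∈ s, ∀ y ∈ s, x ≤ y → f y - f x ≤ C * √|y ^ 2 - x ^ 2|) : ContinuousOn f s := by
  intro x hx
  rw [ContinuousWithinAt, tendsto_iff_dist_tendsto_zero]
  have hlim : Tendsto (fun y => C * √|y ^ 2 - x ^ 2|) (𝓝[s] x) (𝓝 0) := by
    have : Continuous (fun y => C * √|y ^ 2 - x ^ 2|) := by fun_prop
    simpa using (this.tendsto x).mono_left nhdsWithin_le_nhds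
  refine squeeze_zero' (Eventually.of_forall fun _ => dist_nonneg) ?_ hlim
  filter_upwards [self_mem_nhdsWithin] with y hy
  rw [dist_eq]
  rcases le_total x y with hxy | hyx
  · rw [abs_of_nonneg (sub_nonneg.mpr (hf hx hy hxy))]
    exact hC x hx y hy hxy
  · rw [abs_sub_comm, abs_of_nonneg (sub_nonneg.mpr (hf hy hx hyx)), abs_sub_comm]
    exact hC y hy x hx hyx

lemma existsUnique_eq_zero_of_injOn {f : ℝ → ℝ} {a b : ℝ} (hab : a ≤ b) (hf : InjOn f (Icc a b))
    (hcont : ContinuousOn f (Icc a b)) (ha : f a < 0) (hb : 0 < f b) :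
    ∃! x, x ∈ Ioo a b ∧ f x = 0 := by
  obtain ⟨x, hx, hfx⟩ := intermediate_value_Ioo hab hcont ⟨ha, hb⟩
  exact ⟨x, ⟨hx, hfx⟩, fun y ⟨hy, hfy⟩ =>
    hf (Ioo_subset_Icc_self hy) (Ioo_subset_Icc_self hx) (hfy.trans hfx.symm)⟩

noncomputable def profile (m β t : ℝ) : ℝ := (m + 1) * √(1 - t ^ 2) + m * √(β ^ 2 - t ^ 2) + t

def IsProfileCrit (m β u : ℝ) : Prop :=
  u ∈ Ioo 0 1 ∧ (m + 1) * u / √(1 - u ^ 2) + m * u / √(β ^ 2 - u ^ 2) = 1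

lemma profile_succ_sub_profile (m β t : ℝ) :
    profile (m + 1) β t - profile m β t = √(1 - t ^ 2) + √(β ^ 2 - t ^ 2) := by
  simp only [profile]; ring

namespace IsProfileCrit

variable {m β u : ℝ}

lemma isMaxOn (hm : 0 ≤ m) (hβ : 1 ≤ β) (h : IsProfileCrit m β u) :
    IsMaxOn (profile m β) (Icc 0 1) u := by
  obtain ⟨⟨hu0, hu1⟩, hcrit⟩ := h
  intro t ⟨ht0, ht1⟩
  have ha : 0 < 1 - u ^ 2 := by nlinarith
  have hb : 0 < β ^ 2 - u ^ 2 := by nlinarith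
  have ha2 := sq_sqrt ha.le
  have hb2 := sq_sqrt hb.le
  have hap := sqrt_pos.mpr ha
  have hbp := sqrt_pos.mpr hb
  have h1 : √(1 - t ^ 2) ≤ (1 - t * u) / √(1 - u ^ 2) :=
    sqrt_sub_sq_le_div (by nlinarith) (by nlinarith)
  have h2 : √(β ^ 2 - t ^ 2) ≤ (β ^ 2 - t * u) / √(β ^ 2 - u ^ 2) :=
    sqrt_sub_sq_le_div (by nlinarith) (by nlinarith)
  -- the tangent bounds add up to exactly `profile m β u`, by the critical point equation
  have tangent_sum : (m + 1) * ((1 - t * u) / √(1 - u ^ 2))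
      + m * ((β ^ 2 - t * u) / √(β ^ 2 - u ^ 2)) + t = profile m β u := by
    simp only [profile]
    field_simp at hcrit ⊢
    linear_combination
      (u - t) * hcrit - (m + 1) * √(β ^ 2 - u ^ 2) * ha2 - m * √(1 - u ^ 2) * hb2
  show profile m β t ≤ profile m β u
  rw [← tangent_sum, profile]
  gcongr

lemma eq_profile (hβ : 1 ≤ β) (h : IsProfileCrit m β u) :
    (m + 1) / √(1 - u ^ 2) + m * β ^ 2 / √(β ^ 2 - u ^ 2) = profile m β u := by
  obtain ⟨⟨hu0, hu1⟩, hcrit⟩ := h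
  have ha : 0 < 1 - u ^ 2 := by nlinarith
  have hb : 0 < β ^ 2 - u ^ 2 := by nlinarith
  have ha2 := sq_sqrt ha.le
  have hb2 := sq_sqrt hb.le
  have hap := sqrt_pos.mpr ha
  have hbp := sqrt_pos.mpr hb
  simp only [profile]
  field_simp at hcrit ⊢
  linear_combination u * hcrit - (m + 1) * √(β ^ 2 - u ^ 2) * ha2 - m * √(1 - u ^ 2) * hb2

lemma mul_lt_one (hm : 0 ≤ m) (h : IsProfileCrit m β u) : (m + 1) * u < 1 := by
  obtain ⟨⟨hu0, hu1⟩, hcrit⟩ := h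
  have ha : 0 < 1 - u ^ 2 := by nlinarith
  have hsqrt : √(1 - u ^ 2) < 1 := (sqrt_lt' one_pos).mpr (by nlinarith)
  have : (m + 1) * u / √(1 - u ^ 2) ≤ 1 := by
    have : 0 ≤ m * u / √(β ^ 2 - u ^ 2) := by positivity
    linarith
  rw [div_le_one (sqrt_pos.mpr ha)] at this
  linarith

end IsProfileCrit

section gap

variable {m β β' u u' v v' t : ℝ}

lemma profile_gap_lt (hm : 0 ≤ m) (hβ : 1 ≤ β) (hββ' : β < β')
    (hu : IsProfileCrit (m + 1) β u) (hu' : IsProfileCrit (m + 1) β' u')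
    (hv : IsProfileCrit m β v) (hv' : IsProfileCrit m β' v') :
    profile (m + 1) β u - profile m β v < profile (m + 1) β' u' - profile m β' v' := by
  have hβ' : 1 ≤ β' := hβ.trans hββ'.le
  have h1 : profile (m + 1) β' u ≤ profile (m + 1) β' u' :=
    (hu'.isMaxOn (by linarith) hβ') (Ioo_subset_Icc_self hu.1)
  have h2 : profile m β v' ≤ profile m β v := (hv.isMaxOn hm hβ) (Ioo_subset_Icc_self hv'.1)
  have key := mul_sqrt_sub_sqrt_lt hm hβ hββ' (t := u) (by nlinarith [hu.1.1, hu.1.2])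
    hv'.1.1.le (hv'.mul_lt_one hm)
  simp only [profile] at h1 h2 ⊢
  linarith

lemma profile_gap_sub_le (hm : 0 ≤ m) (hβ : 1 ≤ β) (hββ' : β ≤ β')
    (hu : IsProfileCrit (m + 1) β u) (hu' : IsProfileCrit (m + 1) β' u')
    (hv : IsProfileCrit m β v) (hv' : IsProfileCrit m β' v') :
    (profile (m + 1) β' u' - profile m β' v') - (profile (m + 1) β u - profile m β v) ≤
      (m + 1) * √(β' ^ 2 - β ^ 2) := by
  have hβ' : 1 ≤ β' := hβ.trans hββ'
  have h1 : profile (m + 1) β u' ≤ profile (m + 1) β u :=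
    (hu.isMaxOn (by linarith) hβ) (Ioo_subset_Icc_self hu'.1)
  have h2 : profile m β' v ≤ profile m β' v' := (hv'.isMaxOn hm hβ') (Ioo_subset_Icc_self hv.1)
  have hu'2 : u' ^ 2 ≤ β ^ 2 := by nlinarith [hu'.1.1, hu'.1.2]
  have hsub : √(β' ^ 2 - u' ^ 2) ≤ √(β ^ 2 - u' ^ 2) + √(β' ^ 2 - β ^ 2) := by
    have := sqrt_add_le_add_sqrt (sub_nonneg.mpr hu'2) (show 0 ≤ β' ^ 2 - β ^ 2 by nlinarith)
    rwa [sub_add_sub_cancel'] at this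
  have hmono : √(β ^ 2 - v ^ 2) ≤ √(β' ^ 2 - v ^ 2) := sqrt_le_sqrt (by nlinarith)
  simp only [profile] at h1 h2 ⊢
  nlinarith

lemma profile_gap_one_lt_two (hm : 0 ≤ m) (hu : IsProfileCrit (m + 1) 1 u)
    (hv : IsProfileCrit m 1 v) : profile (m + 1) 1 u - profile m 1 v < 2 := by
  have h1 : profile m 1 u ≤ profile m 1 v := (hv.isMaxOn hm le_rfl) (Ioo_subset_Icc_self hu.1)
  have h2 : √(1 - u ^ 2) < 1 := (sqrt_lt' one_pos).mpr (by nlinarith [hu.1.1])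
  have := profile_succ_sub_profile m 1 u
  rw [one_pow] at this
  linarith

lemma profile_one_sub_sqrt_two_le (hm : 0 ≤ m)
    (hu : IsMaxOn (profile (m + 1) β) (Icc 0 1) u) (hv : v ∈ Icc 0 1) (ht : t ∈ Icc 0 1) :
    profile 1 β t - √2 ≤ profile (m + 1) β u - profile m β v := by
  have hvu : profile (m + 1) β v ≤ profile (m + 1) β u := hu hv
  have htu : profile (m + 1) β t ≤ profile (m + 1) β u := hu ht
  have hv0 : profile 0 β v ≤ √2 := by
    simpa [profile] using
      sqrt_one_sub_sq_add_le_sqrt_two (show v ^ 2 ≤ 1 by nlinarith [hv.1, hv.2])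
  have ht0 : profile 0 β t ≤ √2 := by
    simpa [profile] using
      sqrt_one_sub_sq_add_le_sqrt_two (show t ^ 2 ≤ 1 by nlinarith [ht.1, ht.2])
  -- `m ↦ profile m β t` is affine, so the maximum over `t` is convex in `m`
  have affine_v : (m + 1) * profile m β v = profile 0 β v + m * profile (m + 1) β v := by
    simp only [profile]; ring
  have affine_t : (m + 1) * profile 1 β t = m * profile 0 β t + profile (m + 1) β t := by
    simp only [profile]; ring
  refine le_of_mul_le_mul_left ?_ (by linarith : 0 < m + 1)
  nlinarith [mul_le_mul_of_nonneg_left hvu hm, mul_le_mul_of_nonneg_left ht0 hm]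

lemma two_add_sqrt_two_lt_profile : 2 + √2 < profile 1 √2 (1 / 3) := by
  have h2 : √2 ^ 2 = 2 := sq_sqrt (by norm_num)
  have hlt : √2 < 1.415 := (sqrt_lt' (by norm_num)).mpr (by norm_num)
  have h8 : (0.94 : ℝ) < √(1 - (1 / 3) ^ 2) := (lt_sqrt (by norm_num)).mpr (by norm_num)
  have h17 : (1.37 : ℝ) < √(√2 ^ 2 - (1 / 3) ^ 2) :=
    (lt_sqrt (by norm_num)).mpr (by rw [h2]; norm_num)
  simp only [profile]
  linarith

lemma profile_gap_sqrt_two_gt_two (hm : 0 ≤ m) (hu : IsProfileCrit (m + 1) √2 u)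
    (hv : IsProfileCrit m √2 v) : 2 < profile (m + 1) √2 u - profile m √2 v := by
  have hmax := hu.isMaxOn (by linarith) (one_le_sqrt.mpr one_le_two)
  have h := profile_one_sub_sqrt_two_le (t := 1 / 3) hm hmax (Ioo_subset_Icc_self hv.1)
    (by norm_num)
  linarith [two_add_sqrt_two_lt_profile]

end gap

theorem stmt_12 (σ τ : ℕ → ℝ → ℝ)
    (hσrange : ∀ (k : ℕ) (β : ℝ), 1 ≤ β → σ k β ∈ Set.Ioo (0 : ℝ) 1)
    (hτrange : ∀ (k : ℕ) (β : ℝ), 1 ≤ β → τ k β ∈ Set.Ioo (0 : ℝ) 1)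
    (hσeq : ∀ (k : ℕ) (β : ℝ), 1 ≤ β →
      ((k : ℝ) + 1) * σ k β / Real.sqrt (1 - (σ k β) ^ 2)
        + (k : ℝ) * σ k β / Real.sqrt (β ^ 2 - (σ k β) ^ 2) = 1)
    (hτeq : ∀ (k : ℕ) (β : ℝ), 1 ≤ β →
      ((k : ℝ) + 2) * τ k β / Real.sqrt (1 - (τ k β) ^ 2)
        + ((k : ℝ) + 1) * τ k β / Real.sqrt (β ^ 2 - (τ k β) ^ 2) = 1)
    (δ : ℕ → ℝ → ℝ)
    (hδ : ∀ (k : ℕ) (β : ℝ), 1 ≤ β →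
      δ k β = ((k : ℝ) + 2) / Real.sqrt (1 - (τ k β) ^ 2)
        + ((k : ℝ) + 1) * β ^ 2 / Real.sqrt (β ^ 2 - (τ k β) ^ 2)
        - ((k : ℝ) + 1) / Real.sqrt (1 - (σ k β) ^ 2)
        - (k : ℝ) * β ^ 2 / Real.sqrt (β ^ 2 - (σ k β) ^ 2) - 2) :
    ∀ k : ℕ, StrictMonoOn (δ k) (Set.Ici 1) ∧
      δ k 1 < 0 ∧ 0 < δ k (Real.sqrt 2) ∧
      ∃! β : ℝ, β ∈ Set.Ioo 1 (Real.sqrt 2) ∧ δ k β = 0 := by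
  intro k
  have hk : (0 : ℝ) ≤ k := k.cast_nonneg
  have hσ : ∀ β, 1 ≤ β → IsProfileCrit k β (σ k β) := fun β hβ => ⟨hσrange k β hβ, hσeq k β hβ⟩
  have hτ : ∀ β, 1 ≤ β → IsProfileCrit (k + 1) β (τ k β) := fun β hβ =>
    ⟨hτrange k β hβ, by linear_combination hτeq k β hβ⟩
  have hδ_eq : ∀ β, 1 ≤ β → δ k β = profile (k + 1) β (τ k β) - profile k β (σ k β) - 2 := by
    intro β hβ
    rw [hδ k β hβ]
    linear_combination (hτ β hβ).eq_profile hβ - (hσ β hβ).eq_profile hβ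
  have hmono : StrictMonoOn (δ k) (Ici 1) := fun β hβ β' hβ' hlt => by
    rw [hδ_eq β hβ, hδ_eq β' hβ']
    linarith [profile_gap_lt hk hβ hlt (hτ β hβ) (hτ β' hβ') (hσ β hβ) (hσ β' hβ')]
  have hone : δ k 1 < 0 := by
    rw [hδ_eq 1 le_rfl]
    linarith [profile_gap_one_lt_two hk (hτ 1 le_rfl) (hσ 1 le_rfl)]
  have hsqrt2 : 1 ≤ √2 := one_le_sqrt.mpr one_le_two
  have hsqrt2' : 0 < δ k √2 := by
    rw [hδ_eq √2 hsqrt2]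
    linarith [profile_gap_sqrt_two_gt_two hk (hτ √2 hsqrt2) (hσ √2 hsqrt2)]
  have hcont : ContinuousOn (δ k) (Icc 1 √2) :=
    continuousOn_of_monotoneOn_of_sub_le (C := k + 1) (hmono.monotoneOn.mono Icc_subset_Ici_self)
      fun β hβ β' hβ' hle => by
        rw [hδ_eq β hβ.1, hδ_eq β' hβ'.1, abs_of_nonneg (by nlinarith [hβ.1])]
        linarith [profile_gap_sub_le hk hβ.1 hle (hτ β hβ.1) (hτ β' hβ'.1) (hσ β hβ.1)
          (hσ β' hβ'.1)]
  exact ⟨hmono, hone, hsqrt2', existsUnique_eq_zero_of_injOn hsqrt2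
    (hmono.injOn.mono Icc_subset_Ici_self) hcont hone hsqrt2'⟩
end

section
/- The sequence (βᶜ_k) of critical values satisfies 1 < βᶜ_k < 1 + (√2 - 1)/(k+1) for every k ∈ ℕ. In particular βᶜ_k → 1 as k → +∞. -/
open Real Filter

set_option maxHeartbeats 1000000 in
private lemma snell_num (m p β : ℝ) (hm : 2 ≤ m) (hp0 : 0 < p) (hβ0 : 0 < β)
    (hu2 : m^2 ≤ p^2*(m^2+1)) (hβ5 : β^2 ≤ 5 - 4*p) :
    β < 1 + (Real.sqrt 2 - 1)/m := by
  have hm0 : (0:ℝ) < m := by linarith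
  set c := Real.sqrt 2 - 1 with hcdef
  have h2a : (1.414:ℝ) < Real.sqrt 2 := by
    rw [Real.lt_sqrt (by norm_num)]; norm_num
  have h2b : Real.sqrt 2 < 1.41422 := by
    rw [show (1.41422:ℝ) = |1.41422| by rw [abs_of_nonneg]; norm_num, ← Real.sqrt_sq_eq_abs]
    exact Real.sqrt_lt_sqrt (by norm_num) (by norm_num)
  have hsq2 : Real.sqrt 2 ^ 2 = 2 := Real.sq_sqrt (by norm_num)
  have hc1 : (0.414:ℝ) < c := by rw [hcdef]; linarith
  have hc2 : (0.171:ℝ) < c^2 := by rw [hcdef]; nlinarith [hsq2, h2b]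
  clear h2a h2b hsq2 hcdef
  clear_value c
  have hpoly : (4000*m^2 - 828*m - 171)^2 * (m^2+1) < 16000000 * m^6 := by
    nlinarith [sq_nonneg (m-2), sq_nonneg m, sq_nonneg (m^2-2*m), sq_nonneg (m^2-4),
      mul_pos (by nlinarith : (0:ℝ) < m) (by nlinarith : (0:ℝ) < m^2)]
  have hA : (4000*m^2-828*m-171)^2 < (4000*m^2*p)^2 := by
    have h1 : (0:ℝ) < m^2+1 := by positivity
    have h2 : 16000000*m^6 ≤ (4000*m^2*p)^2*(m^2+1) := by
      nlinarith [mul_le_mul_of_nonneg_left hu2 (show (0:ℝ) ≤ 16000000*m^4 by positivity)]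
    have h3 : (4000*m^2-828*m-171)^2*(m^2+1) < (4000*m^2*p)^2*(m^2+1) := by linarith
    exact lt_of_mul_lt_mul_right h3 h1.le
  have hX0 : (0:ℝ) < 4000*m^2*p := by positivity
  have hstep : 4000*m^2 - 828*m - 171 < 4000*m^2*p := by nlinarith [hA, hX0]
  clear hA hX0 hpoly hu2
  have h5 : m^2*β^2 ≤ m^2*(5-4*p) := mul_le_mul_of_nonneg_left hβ5 (by positivity)
  have h6 : m^2*(5-4*p) < (m+c)^2 := by
    nlinarith [hstep, hc2, mul_nonneg (show (0:ℝ) ≤ c - 0.414 by linarith) (show (0:ℝ) ≤ m by linarith)]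
  have hfin : β*m < m + c := by
    nlinarith [h5, h6, mul_pos hβ0 hm0, mul_pos hm0 (show (0:ℝ) < c by linarith)]
  have hrw : (1:ℝ) + c/m = (m+c)/m := by field_simp
  rw [hrw, lt_div_iff₀ hm0]
  exact hfin

set_option maxHeartbeats 1000000 in
private lemma snell_core (nk β s t p q r w : ℝ)
    (hk : 1 ≤ nk) (hβ1 : 1 < β)
    (hs0 : 0 < s) (hs1 : s < 1) (ht0 : 0 < t) (ht1 : t < 1)
    (hp0 : 0 < p) (hq0 : 0 < q) (hr0 : 0 < r) (hw0 : 0 < w)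
    (hp2 : p^2 = 1 - s^2) (hq2 : q^2 = β^2 - s^2)
    (hr2 : r^2 = 1 - t^2) (hw2 : w^2 = β^2 - t^2)
    (e5 : (nk+1)*s*q + nk*s*p = p*q)
    (e6 : (nk+2)*t*w + (nk+1)*t*r = r*w)
    (e7 : (nk+2)/r + (nk+1)*β^2/w - (nk+1)/p - nk*β^2/q - 2 = 0) :
    β < 1 + (Real.sqrt 2 - 1)/(nk+1) := by
  -- tangent inequalities
  have tan1 : p*r ≤ 1 - s*t := by
    have h1 : (p*r)^2 ≤ (1-s*t)^2 := by nlinarith [sq_nonneg (s-t)]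
    have h2 : 0 < 1 - s*t := by nlinarith
    nlinarith [mul_pos hp0 hr0]
  have tan2 : q*w ≤ β^2 - s*t := by
    have h1 : (q*w)^2 ≤ (β^2-s*t)^2 := by nlinarith [sq_nonneg (β*(s-t))]
    have h2 : 0 < β^2 - s*t := by nlinarith
    nlinarith [mul_pos hq0 hw0]
  -- G(σ) ≤ G(τ), multiplied by r*w
  have key_eq : r*w*((nk+2)*r+(nk+1)*w+t) - r*w*((nk+2)*p+(nk+1)*q+s)
      = (nk+2)*w*((1-s*t) - p*r) + (nk+1)*r*((β^2-s*t) - q*w) := by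
    linear_combination ((nk+2)*w)*hr2 + ((nk+1)*r)*hw2 + (s - t)*e6
  have hGmul : r*w*((nk+2)*p+(nk+1)*q+s) ≤ r*w*((nk+2)*r+(nk+1)*w+t) := by
    have a1 : (0:ℝ) ≤ (nk+2)*w*((1-s*t) - p*r) :=
      mul_nonneg (by positivity) (by linarith)
    have a2 : (0:ℝ) ≤ (nk+1)*r*((β^2-s*t) - q*w) :=
      mul_nonneg (by positivity) (by linarith)
    linarith [key_eq, a1, a2]
  have hG : (nk+2)*p+(nk+1)*q+s ≤ (nk+2)*r+(nk+1)*w+t :=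
    le_of_mul_le_mul_left hGmul (mul_pos hr0 hw0)
  -- identities turning the δ-equation into the geometric one
  have idA : (nk+1)/p + nk*β^2/q = (nk+1)*p + nk*q + s := by
    field_simp
    linear_combination (-(nk+1)*q)*hp2 + (-nk*p)*hq2 + s*e5
  have idB : (nk+2)/r + (nk+1)*β^2/w = (nk+2)*r + (nk+1)*w + t := by
    field_simp
    linear_combination (-(nk+2)*w)*hr2 + (-(nk+1)*r)*hw2 + t*e6
  have hδeq : (nk+2)*r+(nk+1)*w+t = (nk+1)*p + nk*q + s + 2 := by
    rw [← idA, ← idB]; linarith [e7]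
  have F1 : p + q ≤ 2 := by rw [hδeq] at hG; linarith
  have hβ5 : β^2 ≤ 5 - 4*p := by
    nlinarith [mul_self_le_mul_self hq0.le (by linarith : q ≤ 2 - p)]
  have F2 : (nk+1)*s ≤ p := by
    nlinarith [mul_nonneg (mul_nonneg (by linarith : (0:ℝ) ≤ nk) hs0.le) hp0.le, hq0]
  clear tan1 tan2 key_eq hGmul hG idA idB hδeq F1 e5 e6 e7 hq2 hr2 hw2
  have hu2 : (nk+1)^2 ≤ p^2*((nk+1)^2+1) := by
    nlinarith [mul_self_le_mul_self (mul_nonneg (by linarith : (0:ℝ) ≤ nk+1) hs0.le) F2,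
      hp2, sq_nonneg ((nk+1)*p), sq_nonneg (nk+1)]
  exact snell_num (nk+1) p β (by linarith) hp0 (by linarith) hu2 hβ5

theorem stmt_14 (σ τ : ℕ → ℝ → ℝ)
    (hσrange : ∀ (k : ℕ) (β : ℝ), 1 ≤ β → σ k β ∈ Set.Ioo (0 : ℝ) 1)
    (hτrange : ∀ (k : ℕ) (β : ℝ), 1 ≤ β → τ k β ∈ Set.Ioo (0 : ℝ) 1)
    (hσeq : ∀ (k : ℕ) (β : ℝ), 1 ≤ β →
      ((k : ℝ) + 1) * σ k β / Real.sqrt (1 - (σ k β) ^ 2)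
        + (k : ℝ) * σ k β / Real.sqrt (β ^ 2 - (σ k β) ^ 2) = 1)
    (hτeq : ∀ (k : ℕ) (β : ℝ), 1 ≤ β →
      ((k : ℝ) + 2) * τ k β / Real.sqrt (1 - (τ k β) ^ 2)
        + ((k : ℝ) + 1) * τ k β / Real.sqrt (β ^ 2 - (τ k β) ^ 2) = 1)
    (δ : ℕ → ℝ → ℝ)
    (hδ : ∀ (k : ℕ) (β : ℝ), 1 ≤ β →
      δ k β = ((k : ℝ) + 2) / Real.sqrt (1 - (τ k β) ^ 2)
        + ((k : ℝ) + 1) * β ^ 2 / Real.sqrt (β ^ 2 - (τ k β) ^ 2)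
        - ((k : ℝ) + 1) / Real.sqrt (1 - (σ k β) ^ 2)
        - (k : ℝ) * β ^ 2 / Real.sqrt (β ^ 2 - (σ k β) ^ 2) - 2)
    (βc : ℕ → ℝ)
    (hβc : ∀ k : ℕ, βc k ∈ Set.Ioo 1 (Real.sqrt 2) ∧ δ k (βc k) = 0) :
    (∀ k : ℕ, 1 < βc k ∧ βc k < 1 + (Real.sqrt 2 - 1) / ((k : ℝ) + 1)) ∧
      Tendsto βc atTop (nhds 1) := by
  have key : ∀ k : ℕ, 1 < βc k ∧ βc k < 1 + (Real.sqrt 2 - 1) / ((k : ℝ) + 1) := by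
    intro k
    obtain ⟨⟨hb1, hb2⟩, hδ0⟩ := hβc k
    refine ⟨hb1, ?_⟩
    rcases Nat.eq_zero_or_pos k with hk0 | hk1
    · subst hk0
      norm_num
      linarith
    · set β := βc k with hβdef
      have hβle : (1:ℝ) ≤ β := hb1.le
      obtain ⟨hs0, hs1⟩ := hσrange k β hβle
      obtain ⟨ht0, ht1⟩ := hτrange k β hβle
      set s := σ k β with hsdef
      set t := τ k β with htdef
      set p := Real.sqrt (1 - s^2) with hpdef
      set q := Real.sqrt (β^2 - s^2) with hqdef
      set r := Real.sqrt (1 - t^2) with hrdef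
      set w := Real.sqrt (β^2 - t^2) with hwdef
      have hs2 : (0:ℝ) < 1 - s^2 := by nlinarith
      have hq2' : (0:ℝ) < β^2 - s^2 := by nlinarith
      have ht2 : (0:ℝ) < 1 - t^2 := by nlinarith
      have hw2' : (0:ℝ) < β^2 - t^2 := by nlinarith
      have hp0 : 0 < p := Real.sqrt_pos.mpr hs2
      have hq0 : 0 < q := Real.sqrt_pos.mpr hq2'
      have hr0 : 0 < r := Real.sqrt_pos.mpr ht2
      have hw0 : 0 < w := Real.sqrt_pos.mpr hw2'
      have hp2 : p^2 = 1 - s^2 := Real.sq_sqrt hs2.le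
      have hq2 : q^2 = β^2 - s^2 := Real.sq_sqrt hq2'.le
      have hr2 : r^2 = 1 - t^2 := Real.sq_sqrt ht2.le
      have hw2 : w^2 = β^2 - t^2 := Real.sq_sqrt hw2'.le
      have e5 : ((k:ℝ)+1)*s*q + (k:ℝ)*s*p = p*q := by
        have h := hσeq k β hβle
        rw [← hsdef, ← hpdef, ← hqdef] at h
        field_simp at h
        linarith [h]
      have e6 : ((k:ℝ)+2)*t*w + ((k:ℝ)+1)*t*r = r*w := by
        have h := hτeq k β hβle
        rw [← htdef, ← hrdef, ← hwdef] at h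
        field_simp at h
        linarith [h]
      have e7 : ((k:ℝ)+2)/r + ((k:ℝ)+1)*β^2/w - ((k:ℝ)+1)/p - (k:ℝ)*β^2/q - 2 = 0 := by
        have h := hδ k β hβle
        rw [← hsdef, ← htdef, ← hpdef, ← hqdef, ← hrdef, ← hwdef] at h
        rw [← h, hδ0]
      have hk1' : (1:ℝ) ≤ (k:ℝ) := by exact_mod_cast hk1
      exact snell_core (k:ℝ) β s t p q r w hk1' hb1 hs0 hs1 ht0 ht1
        hp0 hq0 hr0 hw0 hp2 hq2 hr2 hw2 e5 e6 e7
  refine ⟨key, ?_⟩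
  have hub : Tendsto (fun k : ℕ => 1 + (Real.sqrt 2 - 1) * (1/((k:ℝ)+1))) atTop
      (nhds (1 + (Real.sqrt 2 - 1) * 0)) :=
    tendsto_const_nhds.add (tendsto_one_div_add_atTop_nhds_zero_nat.const_mul _)
  rw [mul_zero, add_zero] at hub
  refine tendsto_of_tendsto_of_tendsto_of_le_of_le tendsto_const_nhds hub
    (fun k => (key k).1.le) (fun k => ?_)
  have := (key k).2
  rw [mul_one_div]
  exact this.le
end

section
/- For all s ∈ (0,1): 2√(1-s²) + √(3/2 - s²) - 2 - √2 + s < 0. (Equivalently, h¹(s, √(3/2)) < 0 for all s ∈ (0,1).) -/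
open Real

theorem stmt_16 :
    ∀ s ∈ Set.Ioo (0 : ℝ) 1,
      2 * Real.sqrt (1 - s ^ 2) + Real.sqrt (3 / 2 - s ^ 2)
        - 2 - Real.sqrt 2 + s < 0 := by
  intro s hs
  obtain ⟨hs0, hs1⟩ := hs
  set a := Real.sqrt (1 - s ^ 2) with ha
  set b := Real.sqrt (3 / 2 - s ^ 2) with hb
  have ha0 : 0 ≤ a := Real.sqrt_nonneg _
  have hb0 : 0 ≤ b := Real.sqrt_nonneg _
  have ha2 : a ^ 2 = 1 - s ^ 2 := Real.sq_sqrt (by nlinarith)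
  have hb2 : b ^ 2 = 3 / 2 - s ^ 2 := Real.sq_sqrt (by nlinarith)
  have h2 : Real.sqrt 2 > 1.414 := by
    nlinarith [Real.sq_sqrt (by norm_num : (2:ℝ) ≥ 0), Real.sqrt_nonneg 2]
  have h1 : 6 * a + 2 * s ≤ 6.33 := by
    nlinarith [sq_nonneg (a - 3 * s), sq_nonneg (6 * a + 2 * s - 6.33)]
  have h3 : 3 * b + s ≤ 3.873 := by
    nlinarith [sq_nonneg (b - 3 * s), sq_nonneg (3 * b + s - 3.873)]
  nlinarith
end
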